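/- arXiv:2104.03038 — 5 statements merged into one kernel-verified Lean document; each statement's English description precedes it below -/
import Mathlib

section
/- Let K be a simplicial Σ_n-complex and L a simplicial complex. If simplicial maps φ_1, ..., φ_n : K → L are symmetrically contiguous, then their geometric realizations |φ_1|, ..., |φ_n| : |K| → |L| are symmetrically homotopic, via the homotopy H : |K| × I_n → |L| obtained by linear interpolation along each contiguity chain. -/
noncomputable section
open scoped ENat
attribute [local instance] Classical.propDecidable

universe u v

/-! ### The wedge `I_n` of `n` unit intervals glued at `0` -/

def wedgeSetoid (n : ℕ) : Setoid (Fin n × unitInterval) where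
  r p q := p = q ∨ (p.2 = 0 ∧ q.2 = 0)
  iseqv := by
    refine ⟨fun _ => Or.inl rfl, ?_, ?_⟩
    · rintro p q (rfl | ⟨h1, h2⟩)
      · exact Or.inl rfl
      · exact Or.inr ⟨h2, h1⟩
    · rintro p q s (rfl | ⟨h1, h2⟩) h
      · exact h
      · rcases h with rfl | ⟨h3, h4⟩
        · exact Or.inr ⟨h1, h2⟩
        · exact Or.inr ⟨h1, h4⟩

def WedgeI (n : ℕ) : Type := Quotient (wedgeSetoid n)

instance (n : ℕ) : TopologicalSpace (WedgeI n) := by unfold WedgeI; infer_instance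

/-- the point `t_j` on the `j`-th arm of `I_n`. -/
def arm (n : ℕ) (j : Fin n) (t : unitInterval) : WedgeI n :=
  Quotient.mk (wedgeSetoid n) (j, t)

/-- The `n`-th symmetric topological complexity `TC^Σ_n(X)`:  the equivariant sectional
category of the fibration `e_n : X^{I_n} → X^n`. -/
def TCSigma (n : ℕ) (X : Type v) [TopologicalSpace X] : ℕ∞ :=
  sInf {k : ℕ∞ | ∃ k0 : ℕ, k = (k0 : ℕ∞) ∧
    ∃ U : Fin k0 → Set (Fin n → X),
      (∀ i, IsOpen (U i)) ∧
      (∀ x, ∃ i, x ∈ U i) ∧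
      (∀ i (g : Equiv.Perm (Fin n)), ∀ x ∈ U i, (fun j => x (g j)) ∈ U i) ∧
      ∀ i, ∃ s : C(↥(U i), C(WedgeI n, X)),
        (∀ (x : ↥(U i)) (j : Fin n), (s x) (arm n j 1) = x.1 j) ∧
        ∀ (g : Equiv.Perm (Fin n)) (x : Fin n → X) (hx : x ∈ U i)
          (hgx : (fun j => x (g j)) ∈ U i) (t : unitInterval) (j : Fin n),
          (s ⟨fun j => x (g j), hgx⟩) (arm n j t) = (s ⟨x, hx⟩) (arm n (g j) t)}

/-! ### Abstract simplicial complexes, simplicial maps and contiguity -/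

structure ASC (V : Type u) where
  faces : Set (Finset V)
  nonempty_of_mem : ∀ {σ : Finset V}, σ ∈ faces → σ.Nonempty
  down_closed : ∀ {σ τ : Finset V}, σ ∈ faces → τ ⊆ σ → τ.Nonempty → τ ∈ faces

def IsSimplicialMap {V : Type u} {W : Type v} (K : ASC V) (L : ASC W) (f : V → W) : Prop :=
  ∀ σ ∈ K.faces, σ.image f ∈ L.faces

/-- one-step contiguity (of simplicial maps). -/
def OneCont {V : Type u} {W : Type v} (K : ASC V) (L : ASC W) (f g : V → W) : Prop :=
  IsSimplicialMap K L f ∧ IsSimplicialMap K L g ∧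
    ∀ σ ∈ K.faces, σ.image f ∪ σ.image g ∈ L.faces

/-- `c`-contiguity. -/
def Contig {V : Type u} {W : Type v} (K : ASC V) (L : ASC W) (c : ℕ) (f g : V → W) : Prop :=
  ∃ φ : ℕ → V → W, φ 0 = f ∧ φ c = g ∧ ∀ i < c, OneCont K L (φ i) (φ (i + 1))

/-- `v` is a vertex of `K`. -/
def vertexOf {V : Type u} (K : ASC V) (v : V) : Prop := {v} ∈ K.faces

/-- Symmetric contiguity of the family `f_1, …, f_n : K → L` relative to an action `act` of
`Σ_n` on the vertices of `K`. -/
def SymContiguousOn {V : Type u} {W : Type v} (n : ℕ) (act : Equiv.Perm (Fin n) → V → V)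
    (K : ASC V) (L : ASC W) (f : Fin n → V → W) : Prop :=
  (∀ (j : Fin n) (g : Equiv.Perm (Fin n)) (v : V), vertexOf K v → f j (act g v) = f (g j) v) ∧
  ∃ (c : ℕ) (φ : Fin n → ℕ → V → W), 0 < c ∧
    (∀ j j', φ j 0 = φ j' 0) ∧
    (∀ (j : Fin n) (g : Equiv.Perm (Fin n)) (v : V), vertexOf K v → φ j 0 (act g v) = φ j 0 v) ∧
    (∀ j, φ j c = f j) ∧
    (∀ j l, l < c → OneCont K L (φ j l) (φ j (l + 1))) ∧
    (∀ (j : Fin n) (l : ℕ) (g : Equiv.Perm (Fin n)) (v : V),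
      vertexOf K v → l ≤ c → φ j l (act g v) = φ (g j) l v)
/-! ### Geometric realization -/

def ASC.realization {V : Type u} [Fintype V] (K : ASC V) : Set (V → ℝ) :=
  {α | (∀ v, 0 ≤ α v) ∧ (∑ v, α v) = 1 ∧ ∃ σ ∈ K.faces, ∀ v, α v ≠ 0 → v ∈ σ}

/-- the open star of a vertex in the realization. -/
def ASC.star {V : Type u} [Fintype V] (K : ASC V) (v : V) : Set (V → ℝ) :=
  {α | α ∈ K.realization ∧ α v ≠ 0}

/-- realization of a vertex map (pushforward of weights). -/
def realizeMap {V : Type u} {W : Type v} [Fintype V] (f : V → W) (α : V → ℝ) : W → ℝ :=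
  fun w => ∑ v ∈ Finset.univ.filter (fun v => f v = w), α v

/-! ### Barycentric subdivision of a simplicial complex -/

/-- the barycentric subdivision: vertices are the simplices of `K`, simplices are chains. -/
def sdC {W : Type u} (K : ASC W) : ASC (Finset W) where
  faces := {c | c.Nonempty ∧ (∀ σ ∈ c, σ ∈ K.faces) ∧ IsChain (· ⊆ ·) (c : Set (Finset W))}
  nonempty_of_mem h := h.1
  down_closed := by
    intro σ τ hσ hsub hne
    exact ⟨hne, fun x hx => hσ.2.1 x (hsub hx), hσ.2.2.mono (Finset.coe_subset.mpr hsub)⟩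

/-- the canonical linear map `|sd K| → |K|` sending the vertex `σ` to the barycenter of `σ`. -/
def stepReal (W : Type u) [Fintype W] (β : Finset W → ℝ) : W → ℝ :=
  fun w => ∑ σ : Finset W, β σ * (if w ∈ σ then ((σ.card : ℝ))⁻¹ else 0)

/-! ### Order complexes, products, lower-set (Alexandrov) topologies -/

/-- the order complex of a poset: simplices are finite nonempty chains. -/
def OC (P : Type u) [Preorder P] : ASC P where
  faces := {σ | σ.Nonempty ∧ IsChain (· ≤ ·) (σ : Set P)}
  nonempty_of_mem h := h.1
  down_closed := by
    intro σ τ hσ hsub hne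
    exact ⟨hne, hσ.2.mono (Finset.coe_subset.mpr hsub)⟩

/-- the `n`-fold ordered cartesian product `K^n` of an ordered simplicial complex. -/
def powC {V : Type u} [PartialOrder V] (K : ASC V) (n : ℕ) : ASC (Fin n → V) where
  faces := {S | S.Nonempty ∧ IsChain (· ≤ ·) (S : Set (Fin n → V)) ∧
    ∀ j, S.image (fun x => x j) ∈ K.faces}
  nonempty_of_mem h := h.1
  down_closed := by
    intro S T hS hsub hne
    refine ⟨hne, hS.2.1.mono (Finset.coe_subset.mpr hsub), fun j => ?_⟩
    exact K.down_closed (hS.2.2 j) (Finset.image_subset_image hsub) (hne.image _)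

/-- The Alexandrov topology associated to a relation: open sets are the down-sets. -/
def lowTop (α : Type u) (le : α → α → Prop) : TopologicalSpace α where
  IsOpen U := ∀ a ∈ U, ∀ b, le b a → b ∈ U
  isOpen_univ := fun _ _ _ _ => trivial
  isOpen_inter := fun U V hU hV a ha b hb => ⟨hU a ha.1 b hb, hV a ha.2 b hb⟩
  isOpen_sUnion := by
    intro S hS a ha b hb
    obtain ⟨U, hUS, haU⟩ := ha
    exact ⟨U, hUS, hS U hUS a haU b hb⟩

/-- product topology, with an explicitly given topology on the first factor. -/
def prodTop (P : Type u) (lp : TopologicalSpace P) (Y : Type v) [ty : TopologicalSpace Y] :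
    TopologicalSpace (P × Y) := @instTopologicalSpaceProd P Y lp ty
/-! ### The finite "wedge of fences" poset `J_{n,m}` -/

/-- `J_{n,m}`: `none` is the common basepoint `0`, `some (j, i)` is the point `(i+1)_j`
on the `j`-th fence. -/
abbrev JP (n m : ℕ) : Type := Option (Fin n × Fin m)

/-- the zigzag (fence) order on values `0,1,2,…`:  `e ≤ o` when `e` is even, `o` odd and
they are adjacent. -/
def fLE (a b : ℕ) : Prop := a = b ∨ (a % 2 = 0 ∧ b % 2 = 1 ∧ (b = a + 1 ∨ a = b + 1))

/-- the order relation on `J_{n,m}`. -/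
def JLE {n m : ℕ} : JP n m → JP n m → Prop
  | none, none => True
  | none, some q => fLE 0 (q.2.1 + 1)
  | some p, none => fLE (p.2.1 + 1) 0
  | some p, some q => p.1 = q.1 ∧ fLE (p.2.1 + 1) (q.2.1 + 1)

/-- the end point `m_j` of the `j`-th fence. -/
def endPt (n m : ℕ) (j : Fin n) : JP n m :=
  if h : 0 < m then some (j, ⟨m - 1, by omega⟩) else none

/-- the action of `Σ_n` on `J_{n,m}` permuting the fences. -/
def jAct {n m : ℕ} (g : Equiv.Perm (Fin n)) : JP n m → JP n m :=
  Option.map (fun p => (g p.1, p.2))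

/-- order-preserving maps out of `J_{n,m}`. -/
def JMono {n m : ℕ} {P : Type u} [Preorder P] (γ : JP n m → P) : Prop :=
  ∀ a b, JLE a b → γ a ≤ γ b

/-! ### Iterated barycentric subdivisions (concrete model) -/

/-- `SdT V r` is the `r`-fold iterated `Finset` of `V`: the potential vertices of the `r`-fold
barycentric subdivision. -/
def SdT (V : Type u) : ℕ → Type u
  | 0 => V
  | r + 1 => Finset (SdT V r)

/-- the order on `SdT`: the given relation at level `0`, inclusion at higher levels. -/
def SdLE (V : Type u) (le0 : V → V → Prop) : (r : ℕ) → SdT V r → SdT V r → Prop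
  | 0 => le0
  | r + 1 => fun (a b : Finset (SdT V r)) => a ⊆ b

/-- elements of `SdT V r` which are genuine iterated chains, i.e. points of `sd^r`. -/
def SdOK (V : Type u) (le0 : V → V → Prop) : (r : ℕ) → SdT V r → Prop
  | 0 => fun _ => True
  | r + 1 => fun (c : Finset (SdT V r)) =>
      c.Nonempty ∧ (∀ x ∈ c, SdOK V le0 r x) ∧
      ∀ x ∈ c, ∀ y ∈ c, SdLE V le0 r x y ∨ SdLE V le0 r y x

/-- functorial lift of a self map to iterated subdivisions. -/
def SdMap (V : Type u) (f : V → V) : (r : ℕ) → SdT V r → SdT V r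
  | 0 => f
  | r + 1 => fun (c : Finset (SdT V r)) => c.image (SdMap V f r)

instance sdNonempty (V : Type u) [Nonempty V] : ∀ r, Nonempty (SdT V r)
  | 0 => ‹Nonempty V›
  | r + 1 => ⟨(∅ : Finset (SdT V r))⟩

instance sdFintype (V : Type u) [Fintype V] : ∀ r, Fintype (SdT V r)
  | 0 => ‹Fintype V›
  | r + 1 => letI := sdFintype V r; inferInstanceAs (Fintype (Finset (SdT V r)))

/-- the greatest element of a finite set w.r.t. a relation (junk value if there is none). -/
def grIn {α : Type u} [Nonempty α] (le : α → α → Prop) (c : Finset α) : α :=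
  if h : ∃ x, x ∈ c ∧ ∀ y ∈ c, le y x then h.choose else Classical.arbitrary α

/-- the iterated "last element" map `τ^r : sd^r(P) → P`. -/
def SdTau (V : Type u) [Nonempty V] (le0 : V → V → Prop) : (r : ℕ) → SdT V r → V
  | 0 => fun x => x
  | r + 1 => fun (c : Finset (SdT V r)) => SdTau V le0 r (grIn (SdLE V le0 r) c)

/-- the permutation action on `P^n`. -/
def pAct {X : Type u} {n : ℕ} (g : Equiv.Perm (Fin n)) (x : Fin n → X) : Fin n → X :=
  fun j => x (g j)

/-- open subsets of `sd^r` (in its Alexandrov topology), as sets of iterated chains. -/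
def SdOpen (X : Type u) (le0 : X → X → Prop) (r : ℕ) (U : Set (SdT X r)) : Prop :=
  (∀ x ∈ U, SdOK X le0 r x) ∧
  ∀ a ∈ U, ∀ b, SdOK X le0 r b → SdLE X le0 r b a → b ∈ U

/-! ### Higher symmetric combinatorial complexity -/

/-- `CC^{Σ,r}_{n,m}(P) ≤ k`. -/
def CCle (P : Type u) [PartialOrder P] [Nonempty P] (n m r k : ℕ) : Prop :=
  ∃ U : Fin k → Set (SdT (Fin n → P) r),
    (∀ i, SdOpen (Fin n → P) (· ≤ ·) r (U i)) ∧
    (∀ x, SdOK (Fin n → P) (· ≤ ·) r x → ∃ i, x ∈ U i) ∧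
    (∀ i (g : Equiv.Perm (Fin n)), ∀ x ∈ U i, SdMap (Fin n → P) (pAct g) r x ∈ U i) ∧
    (∀ i, ∃ s : SdT (Fin n → P) r → JP n m → P,
      (∀ x ∈ U i, JMono (s x)) ∧
      (∀ x ∈ U i, ∀ y ∈ U i, SdLE (Fin n → P) (· ≤ ·) r x y → ∀ t, s x t ≤ s y t) ∧
      (∀ (g : Equiv.Perm (Fin n)), ∀ x ∈ U i, ∀ t, s (SdMap (Fin n → P) (pAct g) r x) t = s x (jAct g t)) ∧
      (∀ x ∈ U i, ∀ j : Fin n, s x (endPt n m j) = SdTau (Fin n → P) (· ≤ ·) r x j))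

/-- the value `CC^{Σ,r}_{n,m}(P)` (`∞` if there is no such cover). -/
def CCnm (P : Type u) [PartialOrder P] [Nonempty P] (n m r : ℕ) : ℕ∞ :=
  sInf {k : ℕ∞ | ∃ k0 : ℕ, k = (k0 : ℕ∞) ∧ CCle P n m r k0}

/-- the stable value `CC^{Σ,r}_n(P)` (minimum over all fence lengths `m`). -/
def CCr (P : Type u) [PartialOrder P] [Nonempty P] (n r : ℕ) : ℕ∞ :=
  sInf {k : ℕ∞ | ∃ k0 m : ℕ, k = (k0 : ℕ∞) ∧ CCle P n m r k0}
/-! ### Iterated barycentric subdivision of a simplicial complex, and `SC^{Σ,r}_n` -/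

/-- the `r`-fold barycentric subdivision `sd^r(K)`. -/
def CIter {V : Type u} (K : ASC V) : (r : ℕ) → ASC (SdT V r)
  | 0 => K
  | r + 1 => sdC (CIter K r)

/-- the iterated linear map `|sd^r K| → |K|`. -/
def iterReal (V : Type u) [Fintype V] : (r : ℕ) → (SdT V r → ℝ) → (V → ℝ)
  | 0 => fun α => α
  | r + 1 => fun (β : Finset (SdT V r) → ℝ) => iterReal V r (stepReal (SdT V r) β)

/-- composition of the chosen one-step approximations `ι : sd^{s+1} → sd^s`, giving
`ι^r : sd^r(K^n) → K^n`. -/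
def compIota {V' : Type u} (ιs : (s : ℕ) → Finset (SdT V' s) → SdT V' s) :
    (r : ℕ) → SdT V' r → V'
  | 0 => fun x => x
  | r + 1 => fun (x : Finset (SdT V' r)) => compIota ιs r (ιs r x)

/-- the family `ιs` consists, up to level `r`, of `Σ_n`-equivariant simplicial approximations
of the identity of `|K^n|`. -/
def GoodIota {V : Type u} [Fintype V] [PartialOrder V] (K : ASC V) (n r : ℕ)
    (ιs : (s : ℕ) → Finset (SdT (Fin n → V) s) → SdT (Fin n → V) s) : Prop :=
  ∀ s, s < r →
    IsSimplicialMap (CIter (powC K n) (s + 1)) (CIter (powC K n) s) (ιs s) ∧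
    (∀ (v : SdT (Fin n → V) (s + 1)), ∀ α ∈ (CIter (powC K n) (s + 1)).star v,
      stepReal (SdT (Fin n → V) s) α ∈ (CIter (powC K n) s).star (ιs s v)) ∧
    (∀ (g : Equiv.Perm (Fin n)) (σ : SdT (Fin n → V) (s + 1)),
      ιs s (SdMap (Fin n → V) (pAct g) (s + 1) σ) = SdMap (Fin n → V) (pAct g) s (ιs s σ))

/-- `SC^{Σ,r}_n(K) ≤ k` (with respect to the chosen approximations `ιs`). -/
def SCle {V : Type u} [Fintype V] [PartialOrder V] (K : ASC V) (n r : ℕ)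
    (ιs : (s : ℕ) → Finset (SdT (Fin n → V) s) → SdT (Fin n → V) s) (k : ℕ) : Prop :=
  ∃ L : Fin k → ASC (SdT (Fin n → V) r),
    (∀ i, (L i).faces ⊆ (CIter (powC K n) r).faces) ∧
    (∀ σ ∈ (CIter (powC K n) r).faces, ∃ i, σ ∈ (L i).faces) ∧
    (∀ i (g : Equiv.Perm (Fin n)), ∀ σ ∈ (L i).faces,
      σ.image (SdMap (Fin n → V) (pAct g) r) ∈ (L i).faces) ∧
    (∀ i, SymContiguousOn n (fun g => SdMap (Fin n → V) (pAct g) r) (L i) K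
      (fun j x => compIota ιs r x j))

/-- the value `SC^{Σ,r}_n(K)` with respect to the chosen approximations `ιs`. -/
def SCval {V : Type u} [Fintype V] [PartialOrder V] (K : ASC V) (n r : ℕ)
    (ιs : (s : ℕ) → Finset (SdT (Fin n → V) s) → SdT (Fin n → V) s) : ℕ∞ :=
  sInf {k : ℕ∞ | ∃ k0 : ℕ, k = (k0 : ℕ∞) ∧ SCle K n r ιs k0}
/-! ### Auxiliary material for Statement 6 -/

section Stmt6Aux

variable {V : Type u} {W : Type v} [Fintype V] [Fintype W]

lemma realizeMap_apply (f : V → W) (α : V → ℝ) (w : W) :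
    realizeMap f α w = ∑ v, if f v = w then α v else 0 := by
  rw [realizeMap, Finset.sum_filter]

lemma realizeMap_nonneg {f : V → W} {α : V → ℝ} (h : ∀ v, 0 ≤ α v) (w : W) :
    0 ≤ realizeMap f α w :=
  Finset.sum_nonneg fun v _ => h v

lemma realizeMap_sum (f : V → W) (α : V → ℝ) :
    ∑ w, realizeMap f α w = ∑ v, α v := by
  unfold realizeMap
  rw [Finset.sum_fiberwise_eq_sum_filter Finset.univ Finset.univ f α]
  simp

lemma realizeMap_congr {f g : V → W} {α : V → ℝ} (h : ∀ v, α v ≠ 0 → f v = g v) :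
    realizeMap f α = realizeMap g α := by
  funext w
  rw [realizeMap_apply, realizeMap_apply]
  refine Finset.sum_congr rfl fun v _ => ?_
  by_cases hv : α v = 0
  · simp [hv]
  · rw [h v hv]

lemma realizeMap_comp {X : Type*} [Fintype X] (e : V → W) (g : W → X) (α : V → ℝ) :
    realizeMap g (realizeMap e α) = realizeMap (g ∘ e) α := by
  funext x
  rw [realizeMap_apply]
  simp only [realizeMap_apply]
  have step1 : ∀ w : W, (if g w = x then ∑ v, if e v = w then α v else 0 else 0)
      = ∑ v, if g w = x then (if e v = w then α v else 0) else 0 := by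
    intro w; by_cases h1 : g w = x <;> simp [h1]
  rw [Finset.sum_congr rfl fun w _ => step1 w, Finset.sum_comm]
  refine Finset.sum_congr rfl fun v _ => ?_
  have : ∀ w : W, (if g w = x then if e v = w then α v else 0 else 0)
      = if e v = w then (if g w = x then α v else 0) else 0 := by
    intro w; by_cases h1 : g w = x <;> by_cases h2 : e v = w <;> simp [h1, h2]
  calc ∑ w, (if g w = x then if e v = w then α v else 0 else 0)
      = ∑ w, (if e v = w then (if g w = x then α v else 0) else 0) :=
        Finset.sum_congr rfl fun w _ => this w
    _ = (if g (e v) = x then α v else 0) := by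
        rw [Finset.sum_ite_eq]
        simp
    _ = (if (g ∘ e) v = x then α v else 0) := rfl

lemma realizeMap_support {f : V → W} {α : V → ℝ} {w : W}
    (h : realizeMap f α w ≠ 0) : ∃ v, α v ≠ 0 ∧ f v = w := by
  by_contra hc
  push_neg at hc
  apply h
  rw [realizeMap_apply]
  refine Finset.sum_eq_zero fun v _ => ?_
  by_cases hv : α v = 0
  · simp [hv]
  · simp [hc v hv]

/-- clamping a real number to `[0,1]`. -/
def clampI (s : ℝ) : ℝ := max 0 (min 1 s)

lemma clampI_of_nonpos {s : ℝ} (h : s ≤ 0) : clampI s = 0 := by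
  unfold clampI
  rw [max_eq_left]
  exact le_trans (min_le_right _ _) h

lemma clampI_of_one_le {s : ℝ} (h : 1 ≤ s) : clampI s = 1 := by
  unfold clampI
  rw [min_eq_left h, max_eq_right zero_le_one]

lemma clampI_of_mem {s : ℝ} (h0 : 0 ≤ s) (h1 : s ≤ 1) : clampI s = s := by
  unfold clampI
  rw [min_eq_right h1, max_eq_right h0]

lemma continuous_clampI : Continuous clampI :=
  continuous_const.max (continuous_const.min continuous_id)

/-- the raw homotopy formula: linear interpolation along the chain `φ 0, …, φ c`. -/
def hraw (φ : ℕ → V → W) (c : ℕ) (α : V → ℝ) (t : ℝ) : W → ℝ :=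
  realizeMap (φ 0) α + ∑ l ∈ Finset.range c,
    clampI (c * t - l) • (realizeMap (φ (l + 1)) α - realizeMap (φ l) α)

lemma hraw_zero (φ : ℕ → V → W) (c : ℕ) (α : V → ℝ) :
    hraw φ c α 0 = realizeMap (φ 0) α := by
  unfold hraw
  have : ∀ l ∈ Finset.range c,
      clampI ((c : ℝ) * 0 - l) • (realizeMap (φ (l + 1)) α - realizeMap (φ l) α) = 0 := by
    intro l _
    rw [clampI_of_nonpos (by rw [mul_zero, zero_sub, neg_nonpos]; positivity), zero_smul]
  rw [Finset.sum_congr rfl this]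
  simp

lemma hraw_one (φ : ℕ → V → W) (c : ℕ) (α : V → ℝ) :
    hraw φ c α 1 = realizeMap (φ c) α := by
  unfold hraw
  have : ∀ l ∈ Finset.range c,
      clampI ((c : ℝ) * 1 - l) • (realizeMap (φ (l + 1)) α - realizeMap (φ l) α)
        = realizeMap (φ (l + 1)) α - realizeMap (φ l) α := by
    intro l hl
    rw [Finset.mem_range] at hl
    rw [clampI_of_one_le (by
      have : (l : ℝ) + 1 ≤ (c : ℝ) := by exact_mod_cast Nat.succ_le_of_lt hl
      linarith), one_smul]
  rw [Finset.sum_congr rfl this, Finset.sum_range_sub (fun l => realizeMap (φ l) α)]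
  abel

lemma hraw_segment (φ : ℕ → V → W) {c : ℕ} (hc : 0 < c) (α : V → ℝ) {t : ℝ}
    (ht0 : 0 ≤ t) (ht1 : t ≤ 1) :
    ∃ (l : ℕ) (s : ℝ), l < c ∧ 0 ≤ s ∧ s ≤ 1 ∧
      hraw φ c α t = (1 - s) • realizeMap (φ l) α + s • realizeMap (φ (l + 1)) α := by
  set ct : ℝ := c * t with hct
  have hct0 : 0 ≤ ct := by positivity
  have hctc : ct ≤ c := by
    calc ct ≤ c * 1 := by
          apply mul_le_mul_of_nonneg_left ht1 (by positivity)
      _ = c := mul_one _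
  set l : ℕ := min (Nat.floor ct) (c - 1) with hl
  have hlc : l < c := lt_of_le_of_lt (min_le_right _ _) (by omega)
  have hlle : (l : ℝ) ≤ ct := by
    calc (l : ℝ) ≤ (Nat.floor ct : ℝ) := by exact_mod_cast min_le_left _ _
      _ ≤ ct := Nat.floor_le hct0
  have hlub : ct ≤ (l : ℝ) + 1 := by
    by_cases hcase : Nat.floor ct ≤ c - 1
    · have hleq : l = Nat.floor ct := by omega
      rw [hleq]
      exact le_of_lt (Nat.lt_floor_add_one ct)
    · have hleq : l = c - 1 := by omega
      have : (l : ℝ) + 1 = (c : ℝ) := by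
        rw [hleq]; push_cast [Nat.cast_sub (by omega : 1 ≤ c)]; ring
      rw [this]; exact hctc
  set s : ℝ := ct - l with hs
  refine ⟨l, s, hlc, by linarith, by linarith, ?_⟩
  unfold hraw
  have key : ∀ l' ∈ Finset.range c,
      clampI (ct - l') • (realizeMap (φ (l' + 1)) α - realizeMap (φ l') α)
        = (if l' < l then realizeMap (φ (l' + 1)) α - realizeMap (φ l') α
           else if l' = l then s • (realizeMap (φ (l + 1)) α - realizeMap (φ l) α)
           else 0) := by
    intro l' _
    rcases lt_trichotomy l' l with h | h | h
    · rw [if_pos h, clampI_of_one_le, one_smul]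
      have : (l' : ℝ) + 1 ≤ (l : ℝ) := by exact_mod_cast Nat.succ_le_of_lt h
      linarith
    · subst h
      rw [if_neg (lt_irrefl _), if_pos rfl, clampI_of_mem (by linarith) (by linarith)]
    · rw [if_neg (by omega), if_neg (by omega), clampI_of_nonpos, zero_smul]
      have : (l : ℝ) + 1 ≤ (l' : ℝ) := by exact_mod_cast Nat.succ_le_of_lt h
      linarith
  rw [Finset.sum_congr rfl key]
  rw [← Finset.sum_subset (Finset.range_subset_range.mpr (Nat.succ_le_of_lt hlc))
    (fun l' _ hl' => by
      rw [Finset.mem_range, not_lt] at hl'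
      rw [if_neg (by omega), if_neg (by omega)])]
  rw [Finset.sum_range_succ, if_neg (lt_irrefl _), if_pos rfl]
  have : ∑ l' ∈ Finset.range l,
      (if l' < l then realizeMap (φ (l' + 1)) α - realizeMap (φ l') α
       else if l' = l then s • (realizeMap (φ (l + 1)) α - realizeMap (φ l) α) else 0)
      = ∑ l' ∈ Finset.range l, (realizeMap (φ (l' + 1)) α - realizeMap (φ l') α) := by
    refine Finset.sum_congr rfl fun l' hl' => ?_
    rw [Finset.mem_range] at hl'
    rw [if_pos hl']
  rw [this, Finset.sum_range_sub (fun l' => realizeMap (φ l') α)]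
  funext w
  simp only [Pi.add_apply, Pi.sub_apply, Pi.smul_apply, smul_eq_mul]
  ring

lemma segment_mem {K : ASC V} {L : ASC W} {f g : V → W} {α : V → ℝ}
    (hα : α ∈ K.realization) (hone : OneCont K L f g) {s : ℝ}
    (hs0 : 0 ≤ s) (hs1 : s ≤ 1) :
    (1 - s) • realizeMap f α + s • realizeMap g α ∈ L.realization := by
  obtain ⟨hpos, hsum, σ, hσ, hsupp⟩ := hα
  refine ⟨?_, ?_, σ.image f ∪ σ.image g, hone.2.2 σ hσ, ?_⟩
  · intro w
    simp only [Pi.add_apply, Pi.smul_apply, smul_eq_mul]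
    have h1 : 0 ≤ realizeMap f α w := realizeMap_nonneg hpos w
    have h2 : 0 ≤ realizeMap g α w := realizeMap_nonneg hpos w
    nlinarith
  · simp only [Pi.add_apply, Pi.smul_apply, smul_eq_mul]
    rw [Finset.sum_add_distrib, ← Finset.mul_sum, ← Finset.mul_sum,
      realizeMap_sum, realizeMap_sum, hsum]
    ring
  · intro w hw
    simp only [Pi.add_apply, Pi.smul_apply, smul_eq_mul] at hw
    have : realizeMap f α w ≠ 0 ∨ realizeMap g α w ≠ 0 := by
      by_contra hcon
      push_neg at hcon
      rw [hcon.1, hcon.2] at hw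
      simp at hw
    rcases this with h | h
    · obtain ⟨v, hv, rfl⟩ := realizeMap_support h
      exact Finset.mem_union_left _ (Finset.mem_image_of_mem f (hsupp v hv))
    · obtain ⟨v, hv, rfl⟩ := realizeMap_support h
      exact Finset.mem_union_right _ (Finset.mem_image_of_mem g (hsupp v hv))

lemma continuous_hraw (φ : ℕ → V → W) (c : ℕ) :
    Continuous fun p : ℝ × (V → ℝ) => hraw φ c p.2 p.1 := by
  apply continuous_pi
  intro w
  unfold hraw
  simp only [Pi.add_apply, Finset.sum_apply, Pi.smul_apply, Pi.sub_apply, smul_eq_mul]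
  have hrm : ∀ g : V → W, Continuous fun p : ℝ × (V → ℝ) => realizeMap g p.2 w := by
    intro g
    simp only [realizeMap_apply]
    apply continuous_finset_sum
    intro v _
    by_cases h : g v = w
    · simp only [h, if_true]
      exact (continuous_apply v).comp continuous_snd
    · simp only [h, if_false]
      exact continuous_const
  refine (hrm (φ 0)).add (continuous_finset_sum _ fun l _ => Continuous.mul ?_ ?_)
  · exact continuous_clampI.comp ((continuous_const.mul continuous_fst).sub continuous_const)
  · exact (hrm (φ (l + 1))).sub (hrm (φ l))

lemma continuous_of_discrete_left {A B C : Type*} [TopologicalSpace A] [DiscreteTopology A]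
    [TopologicalSpace B] [TopologicalSpace C] {f : A × B → C}
    (h : ∀ a, Continuous fun b => f (a, b)) : Continuous f := by
  rw [continuous_iff_continuousAt]
  rintro ⟨a, b⟩
  have hmem : {p : A × B | p.1 = a} ∈ nhds (a, b) :=
    IsOpen.mem_nhds ((isOpen_discrete ({a} : Set A)).preimage continuous_fst) rfl
  have hca : ContinuousAt (fun p : A × B => f (a, p.2)) (a, b) :=
    ((h a).comp continuous_snd).continuousAt
  apply hca.congr
  filter_upwards [hmem] with p hp
  rw [show f p = f (p.1, p.2) from rfl, hp]

lemma realization_isCompact (K : ASC V) : IsCompact (K.realization : Set (V → ℝ)) := by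
  apply IsCompact.of_isClosed_subset
    (isCompact_univ_pi fun _ : V => isCompact_Icc (a := (0 : ℝ)) (b := 1))
  · have heq : (K.realization : Set (V → ℝ)) =
        (⋂ v, {α : V → ℝ | 0 ≤ α v}) ∩ ({α : V → ℝ | ∑ v, α v = 1} ∩
          ⋃ σ ∈ K.faces, ⋂ v, {α : V → ℝ | v ∉ σ → α v = 0}) := by
      ext α
      simp only [ASC.realization, Set.mem_setOf_eq, Set.mem_inter_iff, Set.mem_iInter,
        Set.mem_iUnion]
      constructor
      · rintro ⟨h1, h2, σ, hσ, h3⟩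
        exact ⟨h1, h2, σ, hσ, fun v hv => by
          by_contra hne; exact hv (h3 v hne)⟩
      · rintro ⟨h1, h2, σ, hσ, h3⟩
        exact ⟨h1, h2, σ, hσ, fun v hne => by
          by_contra hv; exact hne (h3 v hv)⟩
    rw [heq]
    refine IsClosed.inter (isClosed_iInter fun v =>
      isClosed_le continuous_const (continuous_apply v)) (IsClosed.inter ?_ ?_)
    · exact isClosed_eq (continuous_finset_sum _ fun v _ => continuous_apply v) continuous_const
    · refine Set.Finite.isClosed_biUnion (Set.toFinite _) fun σ _ => isClosed_iInter fun v => ?_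
      by_cases hv : v ∈ σ
      · have : {α : V → ℝ | v ∉ σ → α v = 0} = Set.univ := by
          ext α; simp [hv]
        rw [this]; exact isClosed_univ
      · have : {α : V → ℝ | v ∉ σ → α v = 0} = {α : V → ℝ | α v = 0} := by
          ext α; simp [hv]
        rw [this]
        exact isClosed_eq (continuous_apply v) continuous_const
  · intro α hα
    rw [Set.mem_univ_pi]
    intro v
    refine ⟨hα.1 v, ?_⟩
    rw [← hα.2.1]
    exact Finset.single_le_sum (fun i _ => hα.1 i) (Finset.mem_univ v)

end Stmt6Aux

/-- Symmetrically contiguous simplicial maps `φ_1, …, φ_n : K → L` have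
symmetrically homotopic geometric realizations. -/
theorem statement6 {V W : Type*} [Fintype V] [Fintype W] (n : ℕ)
    (K : ASC V) (L : ASC W)
    (act : Equiv.Perm (Fin n) → V → V)
    (hGK : ∀ (g : Equiv.Perm (Fin n)), ∀ σ ∈ K.faces, σ.image (act g) ∈ K.faces)
    (hact : ∀ (g : Equiv.Perm (Fin n)) (α : V → ℝ), α ∈ K.realization →
      realizeMap (act g) α ∈ K.realization)
    (f : Fin n → V → W)
    (hsc : SymContiguousOn n act K L f) :
    ∃ H : C(↥(K.realization) × WedgeI n, W → ℝ),
      (∀ p, H p ∈ L.realization) ∧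
      (∀ (x : ↥(K.realization)) (j : Fin n), H (x, arm n j 1) = realizeMap (f j) x.1) ∧
      (∀ (g : Equiv.Perm (Fin n)) (α : V → ℝ) (hα : α ∈ K.realization)
        (t : unitInterval) (j : Fin n),
        H (⟨realizeMap (act g) α, hact g α hα⟩, arm n j t) = H (⟨α, hα⟩, arm n (g j) t)) := by
  obtain ⟨hfe, c, φ, hc, hφ00, hφ0act, hφc, hstep, hequiv⟩ := hsc
  haveI : CompactSpace ↥(K.realization) := isCompact_iff_compactSpace.mp (realization_isCompact K)
  haveI : LocallyCompactSpace ↥(K.realization) := inferInstance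
  -- the total map before passing to the quotient
  have hF0 : Continuous fun p : Fin n × (unitInterval × ↥(K.realization)) =>
      hraw (φ p.1) c p.2.2.1 (p.2.1 : ℝ) := by
    apply continuous_of_discrete_left
    intro j
    exact (continuous_hraw (φ j) c).comp
      ((continuous_subtype_val.comp continuous_fst).prodMk
        (continuous_subtype_val.comp continuous_snd))
  let F : C((Fin n × unitInterval) × ↥(K.realization), W → ℝ) :=
    ⟨fun p => hraw (φ p.1.1) c p.2.1 (p.1.2 : ℝ),
      hF0.comp (((continuous_fst.comp continuous_fst)).prodMk
        ((continuous_snd.comp continuous_fst).prodMk continuous_snd))⟩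
  -- descend to the wedge
  have hwd : ∀ a b : Fin n × unitInterval, (wedgeSetoid n).r a b → F.curry a = F.curry b := by
    rintro a b (rfl | ⟨h1, h2⟩)
    · rfl
    · refine ContinuousMap.ext fun x => ?_
      show hraw (φ a.1) c x.1 (a.2 : ℝ) = hraw (φ b.1) c x.1 (b.2 : ℝ)
      rw [h1, h2]
      show hraw (φ a.1) c x.1 ((0 : unitInterval) : ℝ) = hraw (φ b.1) c x.1 ((0 : unitInterval) : ℝ)
      rw [show ((0 : unitInterval) : ℝ) = 0 from rfl, hraw_zero, hraw_zero, hφ00 a.1 b.1]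
  let Gc : C(WedgeI n, C(↥(K.realization), W → ℝ)) :=
    ⟨Quotient.lift (fun p => F.curry p) hwd, F.curry.continuous.quotient_lift hwd⟩
  refine ⟨(Gc.uncurry).comp ⟨Prod.swap, continuous_swap⟩, ?_, ?_, ?_⟩
  · rintro ⟨x, q⟩
    obtain ⟨⟨j, t⟩, rfl⟩ := Quotient.exists_rep q
    have hk : (Gc.uncurry).comp ⟨Prod.swap, continuous_swap⟩
        (x, Quotient.mk (wedgeSetoid n) (j, t)) = hraw (φ j) c x.1 (t : ℝ) := rfl
    rw [hk]
    obtain ⟨l, s, hl, hs0, hs1, heq⟩ := hraw_segment (φ j) hc x.1 t.2.1 t.2.2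
    rw [heq]
    exact segment_mem x.2 (hstep j l hl) hs0 hs1
  · intro x j
    have hk : (Gc.uncurry).comp ⟨Prod.swap, continuous_swap⟩ (x, arm n j 1)
        = hraw (φ j) c x.1 ((1 : unitInterval) : ℝ) := rfl
    rw [hk, show ((1 : unitInterval) : ℝ) = 1 from rfl, hraw_one, hφc j]
  · intro g α hα t j
    have hvert : ∀ v, α v ≠ 0 → vertexOf K v := by
      obtain ⟨_, _, σ, hσ, hsupp⟩ := hα
      intro v hv
      exact K.down_closed hσ (Finset.singleton_subset_iff.mpr (hsupp v hv))
        ⟨v, Finset.mem_singleton_self v⟩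
    have hcomp : ∀ l, l ≤ c →
        realizeMap (φ j l) (realizeMap (act g) α) = realizeMap (φ (g j) l) α := by
      intro l hl
      rw [realizeMap_comp]
      exact realizeMap_congr fun v hv => hequiv j l g v (hvert v hv) hl
    have hk1 : (Gc.uncurry).comp ⟨Prod.swap, continuous_swap⟩
        (⟨realizeMap (act g) α, hact g α hα⟩, arm n j t)
        = hraw (φ j) c (realizeMap (act g) α) (t : ℝ) := rfl
    have hk2 : (Gc.uncurry).comp ⟨Prod.swap, continuous_swap⟩
        (⟨α, hα⟩, arm n (g j) t) = hraw (φ (g j)) c α (t : ℝ) := rfl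
    rw [hk1, hk2]
    unfold hraw
    rw [hcomp 0 (Nat.zero_le c)]
    congr 1
    refine Finset.sum_congr rfl fun l hl => ?_
    rw [Finset.mem_range] at hl
    rw [hcomp (l + 1) hl, hcomp l (le_of_lt hl)]
end
end

section
/- For any finite simplicial complex K, n ≥ 2, and r ≥ 0, one has SC^{Σ,r}_n(K) ≥ SC^{Σ,r+1}_n(K); i.e., the sequence of symmetric simplicial complexities is non-increasing in the subdivision index r. -/
noncomputable section
open scoped ENat
attribute [local instance] Classical.propDecidable

universe u v

namespace ASC

variable {V : Type*} {W : Type*}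

def pullback (M : ASC V) (f : V → W) (L : ASC W) : ASC V where
  faces := {σ | σ ∈ M.faces ∧ σ.image f ∈ L.faces}
  nonempty_of_mem h := M.nonempty_of_mem h.1
  down_closed hσ hτσ hτ :=
    ⟨M.down_closed hσ.1 hτσ hτ,
      L.down_closed hσ.2 (Finset.image_subset_image hτσ) (hτ.image f)⟩

theorem isSimplicialMap_pullback (M : ASC V) (f : V → W) (L : ASC W) :
    IsSimplicialMap (M.pullback f L) L f :=
  fun _ hσ => hσ.2

theorem image_mem_pullback {M : ASC V} {f : V → W} {L : ASC W} {a : V → V} {b : W → W}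
    (ha : IsSimplicialMap M M a) (hb : IsSimplicialMap L L b) (hfab : ∀ v, f (a v) = b (f v))
    {σ : Finset V} (hσ : σ ∈ (M.pullback f L).faces) :
    σ.image a ∈ (M.pullback f L).faces := by
  refine ⟨ha σ hσ.1, ?_⟩
  rw [Finset.image_image, show f ∘ a = b ∘ f from funext hfab, ← Finset.image_image]
  exact hb _ hσ.2

end ASC

theorem IsSimplicialMap.vertexOf_apply {V W : Type*} {K : ASC V} {L : ASC W} {f : V → W}
    (hf : IsSimplicialMap K L f) {v : V} (hv : vertexOf K v) : vertexOf L (f v) := by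
  simpa only [vertexOf, Finset.image_singleton] using hf _ hv

theorem OneCont.comp {U V W : Type*} {M : ASC U} {K : ASC V} {L : ASC W} {f g : V → W}
    {h : U → V} (hfg : OneCont K L f g) (hh : IsSimplicialMap M K h) :
    OneCont M L (f ∘ h) (g ∘ h) := by
  obtain ⟨hf, hg, hunion⟩ := hfg
  refine ⟨fun σ hσ => ?_, fun σ hσ => ?_, fun σ hσ => ?_⟩ <;>
    simp only [← Finset.image_image]
  exacts [hf _ (hh σ hσ), hg _ (hh σ hσ), hunion _ (hh σ hσ)]

theorem SymContiguousOn.comp {U V W : Type*} {n : ℕ} {act : Equiv.Perm (Fin n) → V → V}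
    {act' : Equiv.Perm (Fin n) → U → U} {M : ASC U} {K : ASC V} {L : ASC W}
    {f : Fin n → V → W} {h : U → V} (hf : SymContiguousOn n act K L f)
    (hh : IsSimplicialMap M K h) (hequiv : ∀ g v, h (act' g v) = act g (h v)) :
    SymContiguousOn n act' M L (fun j => f j ∘ h) := by
  obtain ⟨hsym, c, φ, hc, hbase, hbase_inv, hend, hstep, hφ_sym⟩ := hf
  refine ⟨fun j g v hv => ?_, c, fun j l => φ j l ∘ h, hc,
    fun j j' => congrArg (· ∘ h) (hbase j j'), fun j g v hv => ?_,
    fun j => congrArg (· ∘ h) (hend j), fun j l hl => (hstep j l hl).comp hh,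
    fun j l g v hv hl => ?_⟩
  · simp only [Function.comp_apply, hequiv]
    exact hsym j g _ (hh.vertexOf_apply hv)
  · simp only [Function.comp_apply, hequiv]
    exact hbase_inv j g _ (hh.vertexOf_apply hv)
  · simp only [Function.comp_apply, hequiv]
    exact hφ_sym j l g _ (hh.vertexOf_apply hv) hl

theorem isSimplicialMap_pAct {V : Type*} [PartialOrder V] (K : ASC V) (n : ℕ)
    (g : Equiv.Perm (Fin n)) : IsSimplicialMap (powC K n) (powC K n) (pAct g) := by
  -- `powC` and `pAct` are elaborated with classical decidable equality, not the instance on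
  -- `Fin n → V` that instance search finds, so the image lemmas below need it in scope.
  let : DecidableEq (Fin n → V) := Classical.decEq _
  rintro S ⟨hne, hchain, hproj⟩
  refine ⟨hne.image _, ?_, fun j => ?_⟩
  · rw [Finset.coe_image]
    exact hchain.image_of_map_rel _ _ _ fun x y hxy j => hxy (g j)
  · rw [Finset.image_image]
    exact hproj (g j)

theorem IsSimplicialMap.sdC {V W : Type*} {K : ASC V} {L : ASC W} {f : V → W}
    (hf : IsSimplicialMap K L f) : IsSimplicialMap (sdC K) (sdC L) (Finset.image f) := by
  let : DecidableEq (Finset W) := Classical.decEq _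
  rintro c ⟨hne, hmem, hchain⟩
  refine ⟨hne.image _, fun τ hτ => ?_, ?_⟩
  · obtain ⟨σ, hσ, rfl⟩ := Finset.mem_image.mp hτ
    exact hf σ (hmem σ hσ)
  · rw [Finset.coe_image]
    exact hchain.image_of_map_rel _ _ _ fun σ τ hστ => Finset.image_subset_image hστ

theorem IsSimplicialMap.sdMap {V : Type*} {K L : ASC V} {f : V → V}
    (hf : IsSimplicialMap K L f) : ∀ r, IsSimplicialMap (CIter K r) (CIter L r) (SdMap V f r)
  | 0 => hf
  | r + 1 => (hf.sdMap r).sdC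

/-- Pulling a cover of `sd^r(K^n)` back along `ι : sd^{r+1}(K^n) → sd^r(K^n)` gives a cover of
`sd^{r+1}(K^n)`, on which the contiguity chains are the old ones precomposed with `ι`. -/
theorem SCle.succ {V : Type*} [Fintype V] [PartialOrder V] {K : ASC V} {n r k : ℕ}
    {ιs : (s : ℕ) → Finset (SdT (Fin n → V) s) → SdT (Fin n → V) s}
    (hsimp : IsSimplicialMap (CIter (powC K n) (r + 1)) (CIter (powC K n) r) (ιs r))
    (hequiv : ∀ (g : Equiv.Perm (Fin n)) σ,
      ιs r (SdMap (Fin n → V) (pAct g) (r + 1) σ) = SdMap (Fin n → V) (pAct g) r (ιs r σ))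
    (h : SCle K n r ιs k) : SCle K n (r + 1) ιs k := by
  obtain ⟨L, -, hcov, hinv, hcont⟩ := h
  refine ⟨fun i => (CIter (powC K n) (r + 1)).pullback (ιs r) (L i), fun i σ hσ => hσ.1,
    fun σ hσ => ?_, fun i g σ hσ => ?_, fun i => ?_⟩
  · obtain ⟨i, hi⟩ := hcov _ (hsimp σ hσ)
    exact ⟨i, hσ, hi⟩
  · exact ASC.image_mem_pullback ((isSimplicialMap_pAct K n g).sdMap _)
      (hinv i g) (hequiv g) hσ
  · exact (hcont i).comp (ASC.isSimplicialMap_pullback _ _ _) hequiv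

theorem statement8_general {V : Type*} [Fintype V] [PartialOrder V] (K : ASC V)
    (n r : ℕ)
    (ιs : (s : ℕ) → Finset (SdT (Fin n → V) s) → SdT (Fin n → V) s)
    (hι : GoodIota K n (r + 1) ιs) :
    SCval K n (r + 1) ιs ≤ SCval K n r ιs := by
  obtain ⟨hsimp, -, hequiv⟩ := hι r r.lt_succ_self
  refine sInf_le_sInf ?_
  rintro _ ⟨k, rfl, hk⟩
  exact ⟨k, rfl, hk.succ hsimp hequiv⟩

/-- `SC^{Σ,r}_n(K) ≥ SC^{Σ,r+1}_n(K)`: the symmetric simplicial complexities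
are non-increasing in the subdivision index `r`. -/
theorem statement8 {V : Type*} [Fintype V] [PartialOrder V] (K : ASC V)
    (hord : ∀ σ ∈ K.faces, IsChain (· ≤ ·) (σ : Set V))
    (n r : ℕ) (hn : 2 ≤ n)
    (ιs : (s : ℕ) → Finset (SdT (Fin n → V) s) → SdT (Fin n → V) s)
    (hι : GoodIota K n (r + 1) ιs) :
    SCval K n (r + 1) ιs ≤ SCval K n r ιs :=
  statement8_general K n r ιs hι
end
end

section
/- The value SC^{Σ,r}_n(K) is independent of the choice of Σ_n-equivariant simplicial approximation ι^r_{K^n} : sd^r(K^n) → K^n of the identity map on |K|^n. -/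
noncomputable section
open scoped ENat
attribute [local instance] Classical.propDecidable

universe u v

/-! ### Auxiliary lemmas for Statement 9 -/

lemma goodIota_mono {V : Type u} [Fintype V] [PartialOrder V] (K : ASC V) (n r : ℕ)
    (ιs : (s : ℕ) → Finset (SdT (Fin n → V) s) → SdT (Fin n → V) s)
    (h : GoodIota K n (r + 1) ιs) : GoodIota K n r ιs :=
  fun s hs => h s (Nat.lt_succ_of_lt hs)

/-- equivariance of the composed approximation. -/
lemma compIota_equiv {V : Type u} [Fintype V] [PartialOrder V] (K : ASC V) (n : ℕ) :
    ∀ (r : ℕ) (ιs : (s : ℕ) → Finset (SdT (Fin n → V) s) → SdT (Fin n → V) s),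
      GoodIota K n r ιs → ∀ (g : Equiv.Perm (Fin n)) (σ : SdT (Fin n → V) r),
      compIota ιs r (SdMap (Fin n → V) (pAct g) r σ) = pAct g (compIota ιs r σ)
  | 0, ιs, _, g, σ => rfl
  | r + 1, ιs, hι, g, σ => by
      show compIota ιs r (ιs r (SdMap (Fin n → V) (pAct g) (r + 1) σ)) = _
      rw [(hι r (Nat.lt_succ_self r)).2.2 g σ]
      exact compIota_equiv K n r ιs (goodIota_mono K n r ιs hι) g (ιs r σ)

/-- the composed approximation satisfies the star condition. -/
lemma compIota_star {V : Type u} [Fintype V] [PartialOrder V] (K : ASC V) (n : ℕ) :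
    ∀ (r : ℕ) (ιs : (s : ℕ) → Finset (SdT (Fin n → V) s) → SdT (Fin n → V) s),
      GoodIota K n r ιs → ∀ (v : SdT (Fin n → V) r),
      ∀ α ∈ (CIter (powC K n) r).star v,
        iterReal (Fin n → V) r α ∈ (powC K n).star (compIota ιs r v)
  | 0, ιs, _, v, α, hα => hα
  | r + 1, ιs, hι, v, α, hα => by
      have h1 := (hι r (Nat.lt_succ_self r)).2.1 v α hα
      exact compIota_star K n r ιs (goodIota_mono K n r ιs hι) (ιs r v) _ h1

/-- the barycenter of a face lies in the open star of each of its vertices. -/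
lemma barycenter_mem_star {A : Type u} [Fintype A] (C : ASC A) {σ : Finset A}
    (hσ : σ ∈ C.faces) (v : A) (hv : v ∈ σ) :
    (fun w => if w ∈ σ then ((σ.card : ℝ))⁻¹ else 0) ∈ C.star v := by
  have hne : σ.Nonempty := C.nonempty_of_mem hσ
  have hcard : (σ.card : ℝ) ≠ 0 := by
    exact_mod_cast Finset.card_ne_zero_of_mem hv
  refine ⟨⟨fun w => ?_, ?_, σ, hσ, fun w hw => ?_⟩, ?_⟩
  · by_cases h : w ∈ σ
    · simp only [if_pos h]
      positivity
    · simp [if_neg h]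
  · rw [Finset.sum_ite_mem, Finset.univ_inter, Finset.sum_const, nsmul_eq_mul,
      mul_inv_cancel₀ hcard]
  · by_contra h
    exact hw (if_neg h)
  · show (if v ∈ σ then ((σ.card : ℝ))⁻¹ else 0) ≠ 0
    rw [if_pos hv]
    exact inv_ne_zero hcard

/-- two composed approximations map each simplex into a common simplex. -/
lemma union_image_face {V : Type u} [Fintype V] [PartialOrder V] (K : ASC V) (n r : ℕ)
    (ιs ιs' : (s : ℕ) → Finset (SdT (Fin n → V) s) → SdT (Fin n → V) s)
    (hι : GoodIota K n r ιs) (hι' : GoodIota K n r ιs')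
    {σ : Finset (SdT (Fin n → V) r)} (hσ : σ ∈ (CIter (powC K n) r).faces) :
    σ.image (compIota ιs r) ∪ σ.image (compIota ιs' r) ∈ (powC K n).faces := by
  have hne : σ.Nonempty := (CIter (powC K n) r).nonempty_of_mem hσ
  set α : SdT (Fin n → V) r → ℝ := fun w => if w ∈ σ then ((σ.card : ℝ))⁻¹ else 0 with hα
  set β : (Fin n → V) → ℝ := iterReal (Fin n → V) r α with hβ
  obtain ⟨v0, hv0⟩ := hne
  have hreal : β ∈ (powC K n).realization :=
    (compIota_star K n r ιs hι v0 α (barycenter_mem_star _ hσ v0 hv0)).1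
  obtain ⟨T, hT, hsupp⟩ := hreal.2.2
  have hsub : σ.image (compIota ιs r) ∪ σ.image (compIota ιs' r) ⊆ T := by
    intro w hw
    rcases Finset.mem_union.mp hw with hw | hw
    · obtain ⟨v, hv, rfl⟩ := Finset.mem_image.mp hw
      exact hsupp _ (compIota_star K n r ιs hι v α (barycenter_mem_star _ hσ v hv)).2
    · obtain ⟨v, hv, rfl⟩ := Finset.mem_image.mp hw
      exact hsupp _ (compIota_star K n r ιs' hι' v α (barycenter_mem_star _ hσ v hv)).2
  refine (powC K n).down_closed hT hsub ?_
  exact ⟨_, Finset.mem_union_left _ (Finset.mem_image_of_mem _ hv0)⟩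

/-- projections of the two composed approximations are 1-contiguous. -/
lemma oneCont_compIota {V : Type u} [Fintype V] [PartialOrder V] (K : ASC V) (n r : ℕ)
    (ιs ιs' : (s : ℕ) → Finset (SdT (Fin n → V) s) → SdT (Fin n → V) s)
    (hι : GoodIota K n r ιs) (hι' : GoodIota K n r ιs')
    (L : ASC (SdT (Fin n → V) r)) (hL : L.faces ⊆ (CIter (powC K n) r).faces) (j : Fin n) :
    OneCont L K (fun x => compIota ιs r x j) (fun x => compIota ιs' r x j) := by
  have key : ∀ (a b : (s : ℕ) → Finset (SdT (Fin n → V) s) → SdT (Fin n → V) s),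
      GoodIota K n r a → GoodIota K n r b → ∀ σ ∈ L.faces,
      σ.image (fun x => compIota a r x j) ∪ σ.image (fun x => compIota b r x j) ∈ K.faces := by
    intro a b ha hb σ hσ
    have hS := union_image_face K n r a b ha hb (hL hσ)
    have hproj := hS.2.2 j
    have heq : (σ.image (compIota a r) ∪ σ.image (compIota b r)).image (fun x => x j)
        = σ.image (fun x => compIota a r x j) ∪ σ.image (fun x => compIota b r x j) := by
      rw [Finset.image_union, Finset.image_image, Finset.image_image]
      rfl
    rw [heq] at hproj
    exact hproj
  refine ⟨fun σ hσ => ?_, fun σ hσ => ?_, key ιs ιs' hι hι'⟩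
  · have := key ιs ιs hι hι σ hσ
    rwa [Finset.union_self] at this
  · have := key ιs' ιs' hι' hι' σ hσ
    rwa [Finset.union_self] at this

/-- transfer of `SCle` between two good approximation families. -/
lemma SCle_transfer {V : Type u} [Fintype V] [PartialOrder V] (K : ASC V) (n r : ℕ)
    (ιs ιs' : (s : ℕ) → Finset (SdT (Fin n → V) s) → SdT (Fin n → V) s)
    (hι : GoodIota K n r ιs) (hι' : GoodIota K n r ιs') (k : ℕ)
    (h : SCle K n r ιs k) : SCle K n r ιs' k := by
  obtain ⟨L, h1, h2, h3, h4⟩ := h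
  refine ⟨L, h1, h2, h3, fun i => ?_⟩
  have hequiv' : ∀ (j : Fin n) (g : Equiv.Perm (Fin n)) (v : SdT (Fin n → V) r),
      compIota ιs' r (SdMap (Fin n → V) (pAct g) r v) j = compIota ιs' r v (g j) := by
    intro j g v
    rw [compIota_equiv K n r ιs' hι' g v]
    rfl
  obtain ⟨heq, c, φ, hc, h0, h0e, hce, hstep, hsym⟩ := h4 i
  refine ⟨fun j g v _ => hequiv' j g v, c + 1,
    fun j l => if l ≤ c then φ j l else fun x => compIota ιs' r x j,
    Nat.succ_pos c, ?_, ?_, ?_, ?_, ?_⟩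
  · intro j j'
    simp only [if_pos (Nat.zero_le c)]
    exact h0 j j'
  · intro j g v hv
    simp only [if_pos (Nat.zero_le c)]
    exact h0e j g v hv
  · intro j
    simp only [if_neg (Nat.not_succ_le_self c)]
  · intro j l hl
    rcases Nat.lt_or_ge l c with hlc | hlc
    · simp only [if_pos hlc.le, if_pos (Nat.succ_le_of_lt hlc)]
      exact hstep j l hlc
    · have hlc' : l = c := Nat.le_antisymm (Nat.lt_succ_iff.mp hl) hlc
      subst hlc'
      simp only [if_pos (le_refl l), if_neg (Nat.not_succ_le_self l)]
      rw [hce j]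
      exact oneCont_compIota K n r ιs ιs' hι hι' (L i) (h1 i) j
  · intro j l g v hv hl
    rcases Nat.lt_or_ge l (c + 1) with hlc | hlc
    · have hlc2 : l ≤ c := Nat.lt_succ_iff.mp hlc
      simp only [if_pos hlc2]
      exact hsym j l g v hv hlc2
    · have hlc' : l = c + 1 := Nat.le_antisymm hl hlc
      subst hlc'
      simp only [if_neg (Nat.not_succ_le_self c)]
      exact hequiv' j g v

/-- The value `SC^{Σ,r}_n(K)` is independent of the chosen `Σ_n`-equivariant
simplicial approximation of the identity on `|K|^n`. -/
theorem statement9 {V : Type*} [Fintype V] [PartialOrder V] (K : ASC V)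
    (hord : ∀ σ ∈ K.faces, IsChain (· ≤ ·) (σ : Set V))
    (n r : ℕ) (hn : 2 ≤ n)
    (ιs ιs' : (s : ℕ) → Finset (SdT (Fin n → V) s) → SdT (Fin n → V) s)
    (hι : GoodIota K n r ιs) (hι' : GoodIota K n r ιs') :
    SCval K n r ιs = SCval K n r ιs' := by
  unfold SCval
  congr 1
  ext k
  constructor
  · rintro ⟨k0, rfl, h⟩
    exact ⟨k0, rfl, SCle_transfer K n r ιs ιs' hι hι' k0 h⟩
  · rintro ⟨k0, rfl, h⟩
    exact ⟨k0, rfl, SCle_transfer K n r ιs' ιs hι' hι k0 h⟩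
end
end

section
/- Let P be a finite T_0 space with a Σ_n-action and Q an arbitrary finite T_0 space. Then continuous maps f_1, ..., f_n : P → Q satisfying f_j(g·x) = f_{g(j)}(x) are symmetrically homotopic (in the topological sense, via a Σ_n-compatible homotopy P × I_n → Q) if and only if they are symmetrically combinatorially homotopic (via a Σ_n-compatible order-preserving map P × J_{n,m} → Q for some m ≥ 0). -/
noncomputable section
open scoped ENat
attribute [local instance] Classical.propDecidable

universe u v

/-! A combinatorial homotopy `P × J_{n,m} → Q` becomes a topological one by precomposing with the
continuous map `I_n → J_{n,m}` that on each arm rounds `t·m` to the even neighbour away from the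
integers. Conversely, given `H : P × I_n → Q`, consider the path `γ t = ((j, x) ↦ H (x, t_j))` in
the poset of families of maps; as `P` is finite, near every `s` it stays below `γ s`. A Lebesgue
number for the resulting cover of `[0, 1]` gives a partition `t₀ < ⋯ < t_N` and points `σ_ℓ` with
`γ t_ℓ, γ t_{ℓ+1} ≤ γ σ_ℓ`. Reading `H` off at `t₀, σ₀, t₁, σ₁, …` along every fence gives a map on
`J_{n,2N}`, and it is symmetric because the same parameters are used on all arms. -/

open Filter Topology

section LowerSetTopology

variable {α : Type*} {le : α → α → Prop} [IsPreorder α le]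

theorem nhds_lowTop (a : α) : @nhds α (lowTop α le) a = 𝓟 {b | le b a} := by
  let := lowTop α le
  refine le_antisymm (le_principal_iff.2 ?_) fun U hU => ?_
  · exact IsOpen.mem_nhds (fun b hb c hc => trans_of le hc hb) (refl_of le a)
  · obtain ⟨V, hVU, hV, haV⟩ := mem_nhds_iff.1 hU
    exact mem_principal.2 fun b hb => hVU (hV a haV b hb)

theorem continuous_lowTop_iff {X : Type*} [TopologicalSpace X] (f : X → α) :
    @Continuous X α _ (lowTop α le) f ↔ ∀ x, ∀ᶠ y in 𝓝 x, le (f y) (f x) := by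
  let := lowTop α le
  simp only [continuous_iff_continuousAt, ContinuousAt, nhds_lowTop, tendsto_principal]
  rfl

end LowerSetTopology

theorem monotone_of_continuous_lowTop {α β : Type*} [Preorder α] [Preorder β] {f : α → β}
    (hf : @Continuous α β (lowTop α (· ≤ ·)) (lowTop β (· ≤ ·)) f) : Monotone f := by
  let := lowTop α (· ≤ ·)
  intro a b hab
  have := (continuous_lowTop_iff f).1 hf b
  rw [nhds_lowTop, eventually_principal] at this
  exact this a hab

theorem JLE_refl {n m : ℕ} (a : JP n m) : JLE a a := by
  rcases a with _ | p
  exacts [trivial, ⟨rfl, Or.inl rfl⟩]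

theorem JLE_trans {n m : ℕ} {a b c : JP n m} (hab : JLE a b) (hbc : JLE b c) : JLE a c := by
  rcases a with _ | ⟨j₁, i₁⟩ <;> rcases b with _ | ⟨j₂, i₂⟩ <;> rcases c with _ | ⟨j₃, i₃⟩ <;>
    simp only [JLE, fLE, Fin.ext_iff, true_and] at * <;> omega

instance {n m : ℕ} : IsPreorder (JP n m) JLE where
  refl := JLE_refl
  trans _ _ _ := JLE_trans

/-- Rounds the points of `(k, k + 1)` to the even one of `k, k + 1`, so that as a map into the
fence `0 ≤ 1 ≥ 2 ≤ ⋯` the preimages of even (open) points are open and those of odd (closed)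
points are closed. -/
def zigzagRound (u : ℝ) : ℕ := if ⌊u⌋₊ % 2 = 0 then ⌊u⌋₊ else ⌈u⌉₊

theorem zigzagRound_le_ceil (u : ℝ) : zigzagRound u ≤ ⌈u⌉₊ := by
  unfold zigzagRound
  split_ifs
  exacts [Nat.floor_le_ceil u, le_rfl]

@[simp]
theorem zigzagRound_natCast (k : ℕ) : zigzagRound k = k := by
  simp [zigzagRound]

theorem eventually_fLE_zigzagRound {u₀ : ℝ} (hu₀ : 0 ≤ u₀) :
    ∀ᶠ u in 𝓝 u₀, fLE (zigzagRound u) (zigzagRound u₀) := by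
  have hlo : ((⌈u₀⌉₊ : ℝ) - 1) < u₀ := by linarith [Nat.ceil_lt_add_one hu₀]
  filter_upwards [Ioo_mem_nhds hlo (Nat.lt_floor_add_one u₀)] with u ⟨hu₁, hu₂⟩
  have hfloor : ⌊u⌋₊ ≤ ⌊u₀⌋₊ :=
    Nat.lt_succ_iff.1 ((Nat.floor_lt' (by omega)).2 (by exact_mod_cast hu₂))
  have hceil : ⌈u₀⌉₊ ≤ ⌈u⌉₊ := by
    rcases Nat.eq_zero_or_pos ⌈u₀⌉₊ with h | h
    · omega
    · have : ⌈u₀⌉₊ - 1 < ⌈u⌉₊ := Nat.lt_ceil.2 (by rw [Nat.cast_sub h]; push_cast; linarith)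
      omega
  have := Nat.floor_le_ceil u
  have := Nat.floor_le_ceil u₀
  have := Nat.ceil_le_floor_add_one u
  have := Nat.ceil_le_floor_add_one u₀
  unfold zigzagRound fLE
  split_ifs <;> omega

def fenceCoord (m : ℕ) (t : unitInterval) : Fin (m + 1) :=
  ⟨zigzagRound (t * m), Nat.lt_succ_of_le <| (zigzagRound_le_ceil _).trans <|
    Nat.ceil_le.2 (mul_le_of_le_one_left (Nat.cast_nonneg m) t.2.2)⟩

@[simp]
theorem fenceCoord_zero (m : ℕ) : fenceCoord m 0 = 0 := by
  ext; simpa [fenceCoord] using zigzagRound_natCast 0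

@[simp]
theorem fenceCoord_one (m : ℕ) : fenceCoord m 1 = Fin.last m := by
  ext; simp [fenceCoord]

theorem eventually_fLE_fenceCoord (m : ℕ) (s : unitInterval) :
    ∀ᶠ t in 𝓝 s, fLE (fenceCoord m t) (fenceCoord m s) :=
  ((continuous_subtype_val.mul continuous_const).tendsto s).eventually
    (eventually_fLE_zigzagRound (mul_nonneg s.2.1 (Nat.cast_nonneg m)))

section Fences

variable {n m : ℕ}

def toFence (j : Fin n) : Fin (m + 1) → JP n m := Fin.cases none fun i => some (j, i)

theorem JLE_toFence (j : Fin n) {k k' : Fin (m + 1)} (h : fLE k k') :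
    JLE (toFence j k) (toFence j k') := by
  cases k using Fin.cases <;> cases k' using Fin.cases <;> simp_all [toFence, JLE]

theorem jAct_toFence (g : Equiv.Perm (Fin n)) (j : Fin n) (k : Fin (m + 1)) :
    jAct g (toFence j k) = toFence (g j) k := by
  cases k using Fin.cases <;> rfl

theorem toFence_last (j : Fin n) : toFence j (Fin.last m) = endPt n m j := by
  cases m <;> simp [toFence, endPt, Fin.last]

def wedgeToFence (n m : ℕ) : WedgeI n → JP n m :=
  Quotient.lift (fun p => toFence p.1 (fenceCoord m p.2)) <| by
    rintro ⟨j, s⟩ ⟨j', t⟩ (h | ⟨hs, ht⟩)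
    · rw [h]
    · simp only at hs ht
      simp [hs, ht, toFence]

theorem wedgeToFence_arm (j : Fin n) (t : unitInterval) :
    wedgeToFence n m (arm n j t) = toFence j (fenceCoord m t) := rfl

theorem continuous_wedgeToFence :
    @Continuous _ _ _ (lowTop (JP n m) JLE) (wedgeToFence n m) := by
  let := lowTop (JP n m) JLE
  refine Continuous.quotient_lift (continuous_prod_of_discrete_left.2 fun j => ?_) _
  refine (continuous_lowTop_iff _).2 fun s => ?_
  filter_upwards [eventually_fLE_fenceCoord m s] with t ht using JLE_toFence j ht

end Fences

theorem continuous_arm (n : ℕ) (j : Fin n) : Continuous (arm n j) :=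
  continuous_quotient_mk'.comp (Continuous.prodMk_right j)

theorem arm_zero (n : ℕ) (j j' : Fin n) : arm n j 0 = arm n j' 0 :=
  Quotient.sound (Or.inr ⟨rfl, rfl⟩)

/-- `hγ` is continuity of `γ` for the lower-set topology. The zigzag interleaves a partition
`t ℓ` of `[0, 1]` with points `σ ℓ` such that `γ ≤ γ (σ ℓ)` on `[t ℓ, t (ℓ + 1)]`. -/
theorem exists_zigzag_of_eventually_le {Y : Type*} [Preorder Y] (γ : unitInterval → Y)
    (hγ : ∀ s, ∀ᶠ t in 𝓝 s, γ t ≤ γ s) :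
    ∃ (N : ℕ) (τ : ℕ → unitInterval), τ 0 = 0 ∧ τ (2 * N) = 1 ∧
      ∀ a b, fLE a b → γ (τ a) ≤ γ (τ b) := by
  obtain ⟨t, ht0, htmono, ⟨N, htN⟩, hcover⟩ :=
    exists_monotone_Icc_subset_open_cover_unitInterval
      (c := fun s => interior {t | γ t ≤ γ s}) (fun _ => isOpen_interior)
      (fun s _ => Set.mem_iUnion.2 ⟨s, mem_interior_iff_mem_nhds.2 (hγ s)⟩)
  choose σ hσ using hcover
  have hlo : ∀ ℓ, γ (t ℓ) ≤ γ (σ ℓ) :=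
    fun ℓ => interior_subset (s := {t | γ t ≤ γ (σ ℓ)}) (hσ ℓ ⟨le_rfl, htmono ℓ.le_succ⟩)
  have hhi : ∀ ℓ, γ (t (ℓ + 1)) ≤ γ (σ ℓ) :=
    fun ℓ => interior_subset (s := {t | γ t ≤ γ (σ ℓ)}) (hσ ℓ ⟨htmono ℓ.le_succ, le_rfl⟩)
  refine ⟨N, fun k => if k % 2 = 0 then t (k / 2) else σ (k / 2), by simp [ht0],
    by simp [htN N le_rfl], ?_⟩
  rintro a b (rfl | ⟨ha, hb, rfl | rfl⟩)
  · exact le_rfl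
  · dsimp only
    rw [if_pos ha, if_neg (by omega), show (a + 1) / 2 = a / 2 by omega]
    exact hlo _
  · dsimp only
    rw [if_pos ha, if_neg (by omega), show (b + 1) / 2 = b / 2 + 1 by omega]
    exact hhi _

section FenceMap

variable {Y : Type*} {n m : ℕ} (j₀ : Fin n)

def fenceMap (c : ℕ → Fin n → Y) : JP n m → Y :=
  fun t => t.elim (c 0 j₀) fun p => c (p.2 + 1) p.1

theorem exists_fenceMap_eq (c : ℕ → Fin n → Y) (t : JP n m) : ∃ a j, fenceMap j₀ c t = c a j := by
  rcases t with _ | ⟨j, i⟩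
  exacts [⟨0, j₀, rfl⟩, ⟨i + 1, j, rfl⟩]

variable {c : ℕ → Fin n → Y} (hc₀ : ∀ j j', c 0 j = c 0 j')
include hc₀

theorem fenceMap_mono [Preorder Y] (hc : ∀ a b, fLE a b → c a ≤ c b) {t t' : JP n m}
    (h : JLE t t') : fenceMap j₀ c t ≤ fenceMap j₀ c t' := by
  rcases t with _ | ⟨j, i⟩ <;> rcases t' with _ | ⟨j', i'⟩
  · exact le_rfl
  · exact (hc₀ j₀ j').trans_le (hc _ _ h j')
  · simp only [JLE, fLE] at h; omega
  · obtain ⟨rfl, h⟩ := h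
    exact hc _ _ h j

theorem fenceMap_endPt (j : Fin n) : fenceMap j₀ c (endPt n m j) = c m j := by
  unfold endPt
  split_ifs with hm
  · simp only [fenceMap, Option.elim_some]
    rw [Nat.sub_add_cancel hm]
  · rw [Nat.eq_zero_of_not_pos hm]
    exact hc₀ j₀ j

theorem fenceMap_jAct (g : Equiv.Perm (Fin n)) (F : Y → Y) (hF : ∀ a j, c a (g j) = F (c a j))
    (t : JP n m) : fenceMap j₀ c (jAct g t) = F (fenceMap j₀ c t) := by
  rcases t with _ | ⟨j, i⟩
  · exact (hc₀ j₀ (g j₀)).trans (hF 0 j₀)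
  · exact hF _ j

end FenceMap

section SymmetricHomotopy

variable {P Q : Type*} [Preorder P] [Preorder Q] {n : ℕ} {act : Equiv.Perm (Fin n) → P → P}
  {f : Fin n → P → Q}

theorem exists_combHomotopy_of_homotopy [Finite P] (hn : 0 < n) (H : P × WedgeI n → Q)
    (hH : @Continuous (P × WedgeI n) Q (prodTop P (lowTop P (· ≤ ·)) (WedgeI n))
      (lowTop Q (· ≤ ·)) H)
    (hend : ∀ (x : P) (j : Fin n), H (x, arm n j 1) = f j x)
    (hsymm : ∀ (g : Equiv.Perm (Fin n)) (x : P) (t : unitInterval) (j : Fin n),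
      H (act g x, arm n j t) = H (x, arm n (g j) t)) :
    ∃ (m : ℕ) (H' : P → JP n m → Q),
      (∀ (x y : P) (t t' : JP n m), x ≤ y → JLE t t' → H' x t ≤ H' y t') ∧
      (∀ (x : P) (j : Fin n), H' x (endPt n m j) = f j x) ∧
      (∀ (g : Equiv.Perm (Fin n)) (x : P) (t : JP n m), H' (act g x) t = H' x (jAct g t)) := by
  let := lowTop P (· ≤ ·)
  let := lowTop Q (· ≤ ·)
  have hmono (w : WedgeI n) : Monotone fun x => H (x, w) :=
    monotone_of_continuous_lowTop (hH.comp (Continuous.prodMk_left w))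
  let Γ : unitInterval → Fin n → P → Q := fun t j x => H (x, arm n j t)
  have hΓ (s : unitInterval) : ∀ᶠ t in 𝓝 s, Γ t ≤ Γ s := by
    simp only [Pi.le_def, eventually_all]
    intro j x
    exact ((continuous_const.prodMk (continuous_arm n j)).tendsto s).eventually
      ((continuous_lowTop_iff H).1 hH (x, arm n j s))
  obtain ⟨N, τ, hτ₀, hτN, hτ⟩ := exists_zigzag_of_eventually_le Γ hΓ
  have hc₀ (j j' : Fin n) : Γ (τ 0) j = Γ (τ 0) j' := by simp only [Γ, hτ₀, arm_zero n j j']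
  let j₀ : Fin n := ⟨0, hn⟩
  refine ⟨2 * N, fun x t => fenceMap j₀ (fun a => Γ (τ a)) t x, ?_, ?_, ?_⟩
  · intro x y t t' hxy htt'
    obtain ⟨a, j, ha⟩ := exists_fenceMap_eq j₀ (fun a => Γ (τ a)) t'
    calc fenceMap j₀ (fun a => Γ (τ a)) t x ≤ fenceMap j₀ (fun a => Γ (τ a)) t' x :=
          fenceMap_mono j₀ hc₀ hτ htt' x
      _ ≤ fenceMap j₀ (fun a => Γ (τ a)) t' y := by rw [ha]; exact hmono _ hxy
  · intro x j
    beta_reduce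
    rw [fenceMap_endPt j₀ hc₀, hτN]
    exact hend x j
  · intro g x t
    beta_reduce
    rw [fenceMap_jAct j₀ hc₀ g (· ∘ act g) fun a j => funext fun x => (hsymm g x _ j).symm]
    rfl

theorem exists_homotopy_of_combHomotopy {m : ℕ} (H : P → JP n m → Q)
    (hH : ∀ (x y : P) (t t' : JP n m), x ≤ y → JLE t t' → H x t ≤ H y t')
    (hend : ∀ (x : P) (j : Fin n), H x (endPt n m j) = f j x)
    (hsymm : ∀ (g : Equiv.Perm (Fin n)) (x : P) (t : JP n m), H (act g x) t = H x (jAct g t)) :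
    ∃ H' : P × WedgeI n → Q,
      @Continuous (P × WedgeI n) Q (prodTop P (lowTop P (· ≤ ·)) (WedgeI n))
        (lowTop Q (· ≤ ·)) H' ∧
      (∀ (x : P) (j : Fin n), H' (x, arm n j 1) = f j x) ∧
      (∀ (g : Equiv.Perm (Fin n)) (x : P) (t : unitInterval) (j : Fin n),
        H' (act g x, arm n j t) = H' (x, arm n (g j) t)) := by
  refine ⟨fun p => H p.1 (wedgeToFence n m p.2), ?_, fun x j => ?_, fun g x t j => ?_⟩
  · let := lowTop P (· ≤ ·)
    refine (continuous_lowTop_iff (X := P × WedgeI n) _).2 fun ⟨x, w⟩ => ?_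
    rw [nhds_prod_eq, nhds_lowTop]
    filter_upwards [prod_mem_prod (mem_principal_self _)
      ((continuous_lowTop_iff _).1 (continuous_wedgeToFence (m := m)) w)] with ⟨y, w'⟩ ⟨hy, hw'⟩
    exact hH _ _ _ _ hy hw'
  · simp only [wedgeToFence_arm, fenceCoord_one, toFence_last, hend]
  · simp only [wedgeToFence_arm, hsymm, jAct_toFence]

end SymmetricHomotopy

theorem statement13_general {P Q : Type} [PartialOrder P] [PartialOrder Q] [Finite P]
    (n : ℕ) (hn : 2 ≤ n)
    (act : Equiv.Perm (Fin n) → P → P)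
    (f : Fin n → P → Q) :
    (∃ H : P × WedgeI n → Q,
      @Continuous (P × WedgeI n) Q (prodTop P (lowTop P (· ≤ ·)) (WedgeI n))
        (lowTop Q (· ≤ ·)) H ∧
      (∀ (x : P) (j : Fin n), H (x, arm n j 1) = f j x) ∧
      (∀ (g : Equiv.Perm (Fin n)) (x : P) (t : unitInterval) (j : Fin n),
        H (act g x, arm n j t) = H (x, arm n (g j) t)))
    ↔
    (∃ (m : ℕ) (H : P → JP n m → Q),
      (∀ (x y : P) (t t' : JP n m), x ≤ y → JLE t t' → H x t ≤ H y t') ∧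
      (∀ (x : P) (j : Fin n), H x (endPt n m j) = f j x) ∧
      (∀ (g : Equiv.Perm (Fin n)) (x : P) (t : JP n m), H (act g x) t = H x (jAct g t))) :=
  ⟨fun ⟨H, hH, hend, hsymm⟩ => exists_combHomotopy_of_homotopy (by omega) H hH hend hsymm,
    fun ⟨_, H, hH, hend, hsymm⟩ => exists_homotopy_of_combHomotopy H hH hend hsymm⟩

/-- For maps `f_1, …, f_n : P → Q` of finite `T₀` spaces compatible with a
`Σ_n`-action on `P`, symmetric (topological) homotopy is equivalent to symmetric
combinatorial homotopy. -/
theorem statement13 {P Q : Type} [PartialOrder P] [PartialOrder Q] [Finite P] [Finite Q]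
    (n : ℕ) (hn : 2 ≤ n)
    (act : Equiv.Perm (Fin n) → P → P) (hact : ∀ g, Monotone (act g))
    (f : Fin n → P → Q) (hf : ∀ j, Monotone (f j))
    (hsym : ∀ (j : Fin n) (g : Equiv.Perm (Fin n)) (x : P), f j (act g x) = f (g j) x) :
    (∃ H : P × WedgeI n → Q,
      @Continuous (P × WedgeI n) Q (prodTop P (lowTop P (· ≤ ·)) (WedgeI n))
        (lowTop Q (· ≤ ·)) H ∧
      (∀ (x : P) (j : Fin n), H (x, arm n j 1) = f j x) ∧
      (∀ (g : Equiv.Perm (Fin n)) (x : P) (t : unitInterval) (j : Fin n),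
        H (act g x, arm n j t) = H (x, arm n (g j) t)))
    ↔
    (∃ (m : ℕ) (H : P → JP n m → Q),
      (∀ (x y : P) (t t' : JP n m), x ≤ y → JLE t t' → H x t ≤ H y t') ∧
      (∀ (x : P) (j : Fin n), H x (endPt n m j) = f j x) ∧
      (∀ (g : Equiv.Perm (Fin n)) (x : P) (t : JP n m), H (act g x) t = H x (jAct g t))) :=
  statement13_general n hn act f
end
end

section
/- For any finite T_0 space P and n ≥ 2, the zeroth-subdivision symmetric combinatorial complexity equals the symmetric topological complexity of P itself as a finite topological space: CC^{Σ,0}_n(P) = TC^Σ_n(P). -/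
noncomputable section
open scoped ENat
attribute [local instance] Classical.propDecidable

universe u v

/-! ### Auxiliary material for Statement 19 -/

namespace S19

/-- characterization of the topology: opens are exactly the down-sets. -/
def DownOpen (P : Type) [PartialOrder P] [TopologicalSpace P] : Prop :=
  ∀ U : Set P, IsOpen U ↔ ∀ a ∈ U, ∀ b, b ≤ a → b ∈ U

lemma lowTop_downOpen (P : Type) [PartialOrder P] :
    @DownOpen P _ (lowTop P (· ≤ ·)) := fun _ => Iff.rfl

variable {P : Type} [PartialOrder P] [TopologicalSpace P]

lemma le_specializes (hop : DownOpen P) {a b : P} (h : a ≤ b) : a ⤳ b := by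
  rw [specializes_iff_forall_open]
  intro s hs hb
  exact (hop s).1 hs b hb a h

lemma specializes_le (hop : DownOpen P) {a b : P} (h : a ⤳ b) : a ≤ b := by
  have hopen : IsOpen {z : P | z ≤ b} :=
    (hop _).2 (fun a ha c hc => le_trans hc ha)
  exact specializes_iff_forall_open.1 h _ hopen (le_refl b)

variable {n : ℕ}

lemma pin_le_specializes (hop : DownOpen P) {x y : Fin n → P} (h : x ≤ y) : x ⤳ y :=
  specializes_pi.2 fun j => le_specializes hop (h j)

lemma isOpen_pin_downset (hop : DownOpen P) {U : Set (Fin n → P)} (hU : IsOpen U) :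
    ∀ a ∈ U, ∀ b, b ≤ a → b ∈ U :=
  fun a ha b hb => (pin_le_specializes hop hb).mem_open hU ha

lemma isOpen_pin_of_downset (hop : DownOpen P) {U : Set (Fin n → P)}
    (hU : ∀ a ∈ U, ∀ b, b ≤ a → b ∈ U) : IsOpen U := by
  have hrw : U = ⋃ a ∈ U, Set.pi Set.univ (fun j => {z : P | z ≤ a j}) := by
    ext x
    simp only [Set.mem_iUnion, Set.mem_univ_pi, Set.mem_setOf_eq]
    constructor
    · exact fun hx => ⟨x, hx, fun j => le_refl _⟩
    · rintro ⟨a, ha, hx⟩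
      exact hU a ha x hx
  rw [hrw]
  exact isOpen_biUnion fun a _ => isOpen_set_pi Set.finite_univ
    (fun j _ => (hop _).2 (fun p hp q hq => le_trans hq hp))

/-! #### The step function realizing a fence as a path -/

/-- the step function: takes value `v k` on `(k-1, k+1)` for `k` even and value `v k`
at the isolated point `k` for `k` odd. -/
def stepF {Q : Type} (v : ℕ → Q) (r : ℝ) : Q :=
  if (⌊r⌋ : ℝ) = r then v ⌊r⌋.toNat
  else if ⌊r⌋ % 2 = 0 then v ⌊r⌋.toNat else v (⌊r⌋ + 1).toNat

lemma stepF_natCast {Q : Type} (v : ℕ → Q) (k : ℕ) : stepF v (k : ℝ) = v k := by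
  have h : ((⌊(k : ℝ)⌋ : ℤ) : ℝ) = (k : ℝ) := by
    rw [Int.floor_natCast]; norm_num
  rw [stepF, if_pos h, Int.floor_natCast, Int.toNat_natCast]

lemma stepF_le {Q : Type} [PartialOrder Q] {v w : ℕ → Q} (hvw : ∀ a, v a ≤ w a) (r : ℝ) :
    stepF v r ≤ stepF w r := by
  unfold stepF; split_ifs <;> apply hvw

lemma stepF_congr {Q : Type} {v w : ℕ → Q} (hvw : ∀ a, v a = w a) (r : ℝ) :
    stepF v r = stepF w r := by
  unfold stepF; split_ifs <;> apply hvw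

/-- converting ℕ-indexed fence conditions to ℤ-indexed (clamped) ones. -/
lemma fence_int {Q : Type} [PartialOrder Q] (v : ℕ → Q)
    (hA : ∀ a : ℕ, a % 2 = 1 → v (a - 1) ≤ v a)
    (hB : ∀ a : ℕ, a % 2 = 1 → v (a + 1) ≤ v a) :
    (∀ z : ℤ, z % 2 = 1 → v (z - 1).toNat ≤ v z.toNat) ∧
    (∀ z : ℤ, z % 2 = 1 → v (z + 1).toNat ≤ v z.toNat) := by
  constructor <;> intro z hz
  · rcases le_or_gt z 0 with h | h
    · have h0 : (z - 1).toNat = 0 ∧ z.toNat = 0 := by omega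
      rw [h0.1, h0.2]
    · have h1 : z.toNat % 2 = 1 ∧ (z - 1).toNat = z.toNat - 1 := by omega
      rw [h1.2]; exact hA _ h1.1
  · rcases le_or_gt z 0 with h | h
    · have h0 : (z + 1).toNat = 0 ∧ z.toNat = 0 := by omega
      rw [h0.1, h0.2]
    · have h1 : z.toNat % 2 = 1 ∧ (z + 1).toNat = z.toNat + 1 := by omega
      rw [h1.2]; exact hB _ h1.1

/-- every point is a local maximum of `stepF v`. -/
lemma stepF_localmax {Q : Type} [PartialOrder Q] (v : ℕ → Q)
    (hA : ∀ z : ℤ, z % 2 = 1 → v (z - 1).toNat ≤ v z.toNat)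
    (hB : ∀ z : ℤ, z % 2 = 1 → v (z + 1).toNat ≤ v z.toNat)
    (r₀ : ℝ) : ∃ ε > 0, ∀ r : ℝ, |r - r₀| < ε → stepF v r ≤ stepF v r₀ := by
  by_cases hint : (⌊r₀⌋ : ℝ) = r₀
  · refine ⟨1, one_pos, fun r hr => ?_⟩
    set K := ⌊r₀⌋ with hK
    have hlt : ((K : ℝ) - 1) < r ∧ r < (K : ℝ) + 1 := by
      rw [abs_sub_lt_iff] at hr
      constructor <;> [linarith [hr.1, hint.ge]; linarith [hr.2, hint.le]]
    by_cases hri : (⌊r⌋ : ℝ) = r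
    · have hfK : ⌊r⌋ = K := by
        have h1 : (K : ℤ) - 1 < ⌊r⌋ := by
          have : ((K : ℝ) - 1) < (⌊r⌋ : ℝ) := by rw [hri]; exact hlt.1
          exact_mod_cast (by push_cast at this ⊢; linarith : ((K : ℤ) - 1 : ℝ) < (⌊r⌋ : ℝ))
        have h2 : ⌊r⌋ < K + 1 := by
          have : (⌊r⌋ : ℝ) < (K : ℝ) + 1 := by rw [hri]; exact hlt.2
          exact_mod_cast (by push_cast at this ⊢; linarith : ((⌊r⌋ : ℤ) : ℝ) < ((K : ℤ) + 1 : ℝ))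
        omega
      rw [stepF, if_pos hri, stepF, if_pos hint, hfK]
    · have h1 : (K : ℤ) - 1 ≤ ⌊r⌋ := by
        apply Int.le_floor.2; push_cast; exact hlt.1.le
      have h2 : ⌊r⌋ ≤ K := by
        have : ⌊r⌋ < K + 1 := Int.floor_lt.2 (by push_cast; exact hlt.2)
        omega
      rw [stepF, if_neg hri, stepF, if_pos hint]
      rcases (by omega : ⌊r⌋ = K ∨ ⌊r⌋ = K - 1) with hf | hf
      · rw [hf]
        by_cases hKe : K % 2 = 0
        · rw [if_pos hKe]
        · rw [if_neg hKe]
          exact hB K (by omega)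
      · rw [hf]
        by_cases hKo : K % 2 = 1
        · rw [if_pos (by omega : (K - 1) % 2 = 0)]
          exact hA K hKo
        · rw [if_neg (by omega : ¬ (K - 1) % 2 = 0)]
          have : K - 1 + 1 = K := by omega
          rw [this]
  · have h1 : (⌊r₀⌋ : ℝ) < r₀ := lt_of_le_of_ne (Int.floor_le r₀) hint
    have h2 : r₀ < (⌊r₀⌋ : ℝ) + 1 := Int.lt_floor_add_one r₀
    refine ⟨min (r₀ - ⌊r₀⌋) ((⌊r₀⌋ : ℝ) + 1 - r₀), by
      apply lt_min <;> linarith, fun r hr => ?_⟩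
    rw [abs_sub_lt_iff] at hr
    have hr1 : (⌊r₀⌋ : ℝ) < r := by
      have := hr.2
      have := min_le_left (r₀ - (⌊r₀⌋:ℝ)) ((⌊r₀⌋ : ℝ) + 1 - r₀)
      linarith
    have hr2 : r < (⌊r₀⌋ : ℝ) + 1 := by
      have := hr.1
      have := min_le_right (r₀ - (⌊r₀⌋:ℝ)) ((⌊r₀⌋ : ℝ) + 1 - r₀)
      linarith
    have hfl : ⌊r⌋ = ⌊r₀⌋ := by
      apply le_antisymm
      · have : ⌊r⌋ < ⌊r₀⌋ + 1 := Int.floor_lt.2 (by push_cast; exact hr2)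
        omega
      · exact Int.le_floor.2 hr1.le
    have hri : ¬ (⌊r⌋ : ℝ) = r := by
      rw [hfl]; intro hc; rw [← hc] at hr1; exact lt_irrefl _ hr1
    rw [stepF, if_neg hri, stepF, if_neg hint, hfl]

/-- continuity of the path `t ↦ stepF v (m t)` into an Alexandrov space. -/
lemma continuous_stepFpath (hop : DownOpen P) (v : ℕ → P)
    (hA : ∀ z : ℤ, z % 2 = 1 → v (z - 1).toNat ≤ v z.toNat)
    (hB : ∀ z : ℤ, z % 2 = 1 → v (z + 1).toNat ≤ v z.toNat) (m : ℕ) :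
    Continuous fun t : unitInterval => stepF v ((m : ℝ) * (t : ℝ)) := by
  rw [continuous_def]
  intro O hO
  rw [Metric.isOpen_iff]
  intro t₀ ht₀
  obtain ⟨ε, hε, hloc⟩ := stepF_localmax v hA hB ((m : ℝ) * (t₀ : ℝ))
  refine ⟨ε / (m + 1), by positivity, fun t ht => ?_⟩
  have hd : |(m : ℝ) * (t : ℝ) - (m : ℝ) * (t₀ : ℝ)| < ε := by
    rw [← mul_sub, abs_mul, abs_of_nonneg (by positivity : (0:ℝ) ≤ (m:ℝ))]
    have hdist : |(t : ℝ) - (t₀ : ℝ)| < ε / (m + 1) := by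
      have := ht
      rw [Metric.mem_ball, Subtype.dist_eq, Real.dist_eq] at this
      exact this
    calc (m : ℝ) * |(t : ℝ) - (t₀ : ℝ)| ≤ (m : ℝ) * (ε / (m + 1)) := by
          apply mul_le_mul_of_nonneg_left hdist.le (by positivity)
      _ < ε := by
          rw [mul_div_assoc']
          rw [div_lt_iff₀ (by positivity)]
          nlinarith [hε]
  exact (hop O).1 hO _ ht₀ _ (hloc _ hd)

/-- continuity of maps out of `Fin n × unitInterval`. -/
lemma continuous_prod_fin {X : Type} [TopologicalSpace X]
    (f : Fin n × unitInterval → X) (hf : ∀ j, Continuous fun t => f (j, t)) :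
    Continuous f := by
  rw [continuous_iff_continuousAt]
  rintro ⟨j, t⟩
  unfold ContinuousAt
  rw [nhds_prod_eq, nhds_discrete, Filter.pure_prod, Filter.tendsto_map'_iff]
  exact ((hf j).tendsto t)

/-- evaluation at a point preserves the pointwise order, for continuous families. -/
lemma sec_mono (hop : DownOpen P) {Ui : Set (Fin n → P)}
    (s : C(↥Ui, C(WedgeI n, P))) {x y : Fin n → P} (hx : x ∈ Ui) (hy : y ∈ Ui)
    (hxy : x ≤ y) (w : WedgeI n) : s ⟨x, hx⟩ w ≤ s ⟨y, hy⟩ w := by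
  have h1 : (⟨x, hx⟩ : ↥Ui) ⤳ ⟨y, hy⟩ := by
    rw [specializes_iff_forall_open]
    intro V hV hyV
    obtain ⟨W, hW, rfl⟩ := isOpen_induced_iff.1 hV
    exact (pin_le_specializes hop hxy).mem_open hW hyV
  exact specializes_le hop
    ((h1.map s.continuous).map (ContinuousEvalConst.continuous_eval_const w))

/-- the fence lemma: any continuous path in a finite product of Alexandrov spaces admits
a uniform symmetric fence structure. -/
lemma fence_exists (hop : DownOpen P) {T : Type} [Finite T]
    (q : unitInterval → T → P) (hq : Continuous q) :
    ∃ N : ℕ, 0 < N ∧ ∃ u : ℕ → unitInterval, ∃ tg : ℕ → unitInterval,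
      (∀ kk, kk ≤ N → ((tg kk : ℝ) = (kk : ℝ) / (N : ℝ))) ∧
      (∀ kk, kk < N →
        (∀ i, q (tg kk) i ≤ q (u kk) i) ∧ (∀ i, q (tg (kk + 1)) i ≤ q (u kk) i)) := by
  set W : unitInterval → Set unitInterval := fun t => {a | ∀ i, q a i ≤ q t i} with hW
  have hWopen : ∀ t, IsOpen (W t) := by
    intro t
    have heq : W t = q ⁻¹' (Set.pi Set.univ fun i => {p : P | p ≤ q t i}) := by
      ext a; simp [hW, Set.mem_univ_pi]
    rw [heq]
    refine IsOpen.preimage hq (isOpen_set_pi Set.finite_univ fun i _ => ?_)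
    exact (hop {p : P | p ≤ q t i}).2 fun a ha b hb => le_trans hb ha
  have hWcov : (Set.univ : Set unitInterval) ⊆ ⋃ t, W t := by
    intro a _
    exact Set.mem_iUnion.2 ⟨a, fun i => le_refl _⟩
  obtain ⟨δ, hδ, hball⟩ := lebesgue_number_lemma_of_metric isCompact_univ hWopen hWcov
  obtain ⟨N, hNpos, hNδ⟩ : ∃ N : ℕ, 0 < N ∧ 1 / (N : ℝ) < δ := by
    obtain ⟨N0, hN0⟩ := exists_nat_gt (1 / δ)
    refine ⟨N0 + 1, Nat.succ_pos _, ?_⟩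
    rw [div_lt_iff₀ (by positivity)]
    rw [div_lt_iff₀ hδ] at hN0
    push_cast
    nlinarith
  have hNR : (0 : ℝ) < N := by exact_mod_cast hNpos
  have hmid : ∀ kk : ℕ, kk < N → ((2 * kk + 1 : ℝ) / (2 * N)) ∈ unitInterval := by
    intro kk hkk
    constructor
    · positivity
    · rw [div_le_one (by positivity)]
      have : (kk : ℝ) + 1 ≤ N := by exact_mod_cast Nat.succ_le_of_lt hkk
      linarith
  have key : ∀ kk : ℕ, kk < N → ∃ t : unitInterval,
      ∀ a : unitInterval, |(a : ℝ) - (2 * kk + 1 : ℝ) / (2 * N)| < δ → ∀ i, q a i ≤ q t i := by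
    intro kk hkk
    obtain ⟨t, ht⟩ := hball ⟨_, hmid kk hkk⟩ (Set.mem_univ _)
    refine ⟨t, fun a ha i => ?_⟩
    have : a ∈ W t := ht (by rwa [Metric.mem_ball, Subtype.dist_eq, Real.dist_eq])
    exact this i
  have hhalf : (1 : ℝ) / (2 * N) < δ := by
    refine lt_of_le_of_lt ?_ hNδ
    apply one_div_le_one_div_of_le hNR
    linarith
  set u : ℕ → unitInterval := fun kk => if h : kk < N then (key kk h).choose else 0 with hu
  have htgmem : ∀ kk : ℕ, ((min kk N : ℕ) : ℝ) / (N : ℝ) ∈ unitInterval := by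
    intro kk
    constructor
    · positivity
    · rw [div_le_one hNR]
      exact_mod_cast min_le_right kk N
  set tg : ℕ → unitInterval := fun kk => ⟨_, htgmem kk⟩ with htg
  have htgval : ∀ kk, kk ≤ N → ((tg kk : ℝ) = (kk : ℝ) / (N : ℝ)) := by
    intro kk hkk
    simp only [htg]
    rw [min_eq_left hkk]
  refine ⟨N, hNpos, u, tg, htgval, ?_⟩
  intro kk hkk
  have h1 : |(tg kk : ℝ) - (2 * kk + 1 : ℝ) / (2 * N)| < δ := by
    rw [htgval kk hkk.le]
    have : (kk : ℝ) / N - (2 * kk + 1 : ℝ) / (2 * N) = -(1 / (2 * N)) := by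
      field_simp; ring
    rw [this, abs_neg, abs_of_pos (by positivity)]
    exact hhalf
  have h2 : |(tg (kk + 1) : ℝ) - (2 * kk + 1 : ℝ) / (2 * N)| < δ := by
    rw [htgval (kk + 1) (by omega)]
    have : ((kk + 1 : ℕ) : ℝ) / N - (2 * kk + 1 : ℝ) / (2 * N) = 1 / (2 * N) := by
      push_cast; field_simp; ring
    rw [this, abs_of_pos (by positivity)]
    exact hhalf
  have huv : u kk = (key kk hkk).choose := by simp only [hu]; rw [dif_pos hkk]
  rw [huv]
  exact ⟨fun i => (key kk hkk).choose_spec _ h1 i,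
    fun i => (key kk hkk).choose_spec _ h2 i⟩

end S19
namespace S19

/-- the body of the `TCSigma` condition for a given `k`. -/
def TCcond (n : ℕ) (P : Type) [TopologicalSpace P] (k : ℕ) : Prop :=
  ∃ U : Fin k → Set (Fin n → P),
    (∀ i, IsOpen (U i)) ∧
    (∀ x, ∃ i, x ∈ U i) ∧
    (∀ i (g : Equiv.Perm (Fin n)), ∀ x ∈ U i, (fun j => x (g j)) ∈ U i) ∧
    ∀ i, ∃ s : C(↥(U i), C(WedgeI n, P)),
      (∀ (x : ↥(U i)) (j : Fin n), (s x) (arm n j 1) = x.1 j) ∧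
      ∀ (g : Equiv.Perm (Fin n)) (x : Fin n → P) (hx : x ∈ U i)
        (hgx : (fun j => x (g j)) ∈ U i) (t : unitInterval) (j : Fin n),
        (s ⟨fun j => x (g j), hgx⟩) (arm n j t) = (s ⟨x, hx⟩) (arm n (g j) t)

lemma dirA {P : Type} [PartialOrder P] [Nonempty P] [inst : TopologicalSpace P]
    (hop : DownOpen P) {n m k : ℕ} (hn : 2 ≤ n) (h : CCle P n m 0 k) :
    TCcond n P k := by
  classical
  obtain ⟨U0, hUopen, hUcov, hUinv, hUsec⟩ := h
  let U : Fin k → Set (Fin n → P) := U0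
  have hUopen' : ∀ i, ∀ a ∈ U i, ∀ b, b ≤ a → b ∈ U i :=
    fun i a ha b hb => (hUopen i).2 a ha b trivial hb
  refine ⟨U, ?_, ?_, ?_, ?_⟩
  · intro i
    exact isOpen_pin_of_downset hop (hUopen' i)
  · intro x
    exact hUcov x trivial
  · intro i g x hx
    exact hUinv i g x hx
  · intro i
    obtain ⟨s, hmono, hxy, hequiv, hend⟩ := hUsec i
    set jpt : Fin n → ℕ → JP n m := fun j p =>
      if hp : 0 < p ∧ p ≤ m then some (j, ⟨p - 1, by omega⟩) else none with hjpt
    set v : (Fin n → P) → Fin n → ℕ → P := fun x j a => s x (jpt j (min a m)) with hv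
    -- order relations between fence positions
    have hjle : ∀ (j : Fin n) (p q : ℕ), p % 2 = 0 → q % 2 = 1 → q ≤ m → p ≤ m →
        (p = q + 1 ∨ q = p + 1) → JLE (jpt j p) (jpt j q) := by
      intro j p q hp hq hqm hpm hadj
      by_cases hp0 : 0 < p
      · simp only [hjpt]
        rw [dif_pos ⟨hp0, hpm⟩, dif_pos ⟨by omega, hqm⟩]
        refine ⟨rfl, Or.inr ⟨?_, ?_, ?_⟩⟩
        · show (p - 1 + 1) % 2 = 0; omega
        · show (q - 1 + 1) % 2 = 1; omega
        · show q - 1 + 1 = p - 1 + 1 + 1 ∨ p - 1 + 1 = q - 1 + 1 + 1; omega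
      · have hq1 : q = 1 := by omega
        simp only [hjpt]
        rw [dif_neg (by omega), dif_pos ⟨by omega, hqm⟩]
        refine Or.inr ⟨?_, ?_, ?_⟩
        · show 0 % 2 = 0; omega
        · show (q - 1 + 1) % 2 = 1; omega
        · show q - 1 + 1 = 0 + 1 ∨ 0 = q - 1 + 1 + 1; omega
    -- fence conditions for the value sequences
    have hfn : ∀ x ∈ U i, ∀ (j : Fin n) (a : ℕ), a % 2 = 1 →
        v x j (a - 1) ≤ v x j a ∧ v x j (a + 1) ≤ v x j a := by
      intro x hx j a ha
      constructor
      · by_cases ham : a ≤ m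
        · simp only [hv]
          rw [min_eq_left (by omega : a - 1 ≤ m), min_eq_left ham]
          exact hmono x hx _ _ (hjle j (a - 1) a (by omega) ha ham (by omega) (by omega))
        · simp only [hv]
          rw [min_eq_right (by omega : m ≤ a - 1), min_eq_right (by omega : m ≤ a)]
      · by_cases ham : a < m
        · simp only [hv]
          rw [min_eq_left (by omega : a + 1 ≤ m), min_eq_left (by omega : a ≤ m)]
          exact hmono x hx _ _ (hjle j (a + 1) a (by omega) ha (by omega) (by omega) (by omega))
        · simp only [hv]
          rw [min_eq_right (by omega : m ≤ a + 1), min_eq_right (by omega : m ≤ a)]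
    have hfz : ∀ x ∈ U i, ∀ j : Fin n,
        (∀ z : ℤ, z % 2 = 1 → v x j (z - 1).toNat ≤ v x j z.toNat) ∧
        (∀ z : ℤ, z % 2 = 1 → v x j (z + 1).toNat ≤ v x j z.toNat) := by
      intro x hx j
      exact fence_int (v x j) (fun a ha => (hfn x hx j a ha).1) (fun a ha => (hfn x hx j a ha).2)
    -- value at the basepoint
    have hv0 : ∀ x (j : Fin n), v x j 0 = s x none := by
      intro x j
      simp only [hv]
      rw [Nat.zero_min]
      simp only [hjpt]
      rw [dif_neg (by omega)]
    -- the total map on the cylinder and its descent to the wedge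
    set F : (Fin n → P) → Fin n × unitInterval → P :=
      fun x pr => stepF (v x pr.1) ((m : ℝ) * (pr.2 : ℝ)) with hF
    have hstep0 : ∀ (w : ℕ → P), stepF w ((m : ℝ) * ((0 : unitInterval) : ℝ)) = w 0 := by
      intro w
      rw [show ((0 : unitInterval) : ℝ) = ((0 : ℕ) : ℝ) by norm_num, mul_comm]
      rw [show ((0 : ℕ) : ℝ) * (m : ℝ) = ((0 : ℕ) : ℝ) by push_cast; ring]
      exact stepF_natCast w 0
    have hresp : ∀ x, ∀ p q : Fin n × unitInterval, (wedgeSetoid n).r p q → F x p = F x q := by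
      rintro x p q (rfl | ⟨h1, h2⟩)
      · rfl
      · simp only [hF]
        rw [h1, h2, hstep0, hstep0, hv0, hv0]
    set Γ : (Fin n → P) → WedgeI n → P :=
      fun x => Quotient.lift (F x) (hresp x) with hΓ
    have hΓcont : ∀ x ∈ U i, Continuous (Γ x) := by
      intro x hx
      apply Continuous.quotient_lift
      apply continuous_prod_fin
      intro j
      exact continuous_stepFpath hop (v x j) (hfz x hx j).1 (hfz x hx j).2 m
    have hΓle : ∀ (x : Fin n → P), x ∈ U i → ∀ (y : Fin n → P), y ∈ U i → x ≤ y →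
        ∀ w, Γ x w ≤ Γ y w := by
      intro x hx y hy hle w
      refine Quotient.inductionOn w (fun pr => ?_)
      exact stepF_le (fun a => hxy x hx y hy hle (jpt pr.1 (min a m))) _
    have hScont : Continuous (fun x : ↥(U i) => (⟨Γ x.1, hΓcont x.1 x.2⟩ : C(WedgeI n, P))) := by
      rw [ContinuousMap.continuous_compactOpen]
      intro K hK O hO
      have hVopen : IsOpen {y : Fin n → P | y ∈ U i ∧ ∀ w ∈ K, Γ y w ∈ O} := by
        apply isOpen_pin_of_downset hop
        rintro a ⟨haU, haK⟩ b hb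
        have hbU : b ∈ U i := hUopen' i a haU b hb
        exact ⟨hbU, fun w hw => (hop O).1 hO _ (haK w hw) _ (hΓle b hbU a haU hb w)⟩
      have := hVopen.preimage (continuous_subtype_val (p := fun y => y ∈ U i))
      convert this using 1
      ext x
      simp only [ContinuousMap.coe_mk, Set.mem_setOf_eq, Set.mem_preimage]
      constructor
      · intro hmt
        exact ⟨x.2, fun w hw => hmt hw⟩
      · intro hmt w hw
        exact hmt.2 w hw
    refine ⟨⟨fun x => ⟨Γ x.1, hΓcont x.1 x.2⟩, hScont⟩, ?_, ?_⟩
    · intro x j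
      show stepF (v x.1 j) ((m : ℝ) * ((1 : unitInterval) : ℝ)) = x.1 j
      rw [show ((1 : unitInterval) : ℝ) = 1 by norm_num, mul_one]
      rw [stepF_natCast]
      have hjend : jpt j m = endPt n m j := by
        simp only [hjpt]
        unfold endPt
        by_cases hm : 0 < m
        · rw [dif_pos ⟨hm, le_refl m⟩, dif_pos hm]
        · rw [dif_neg (by omega), dif_neg hm]
      simp only [hv]
      rw [min_self, hjend]
      exact hend x.1 x.2 j
    · intro g x hx hgx t j
      show stepF (v (fun j' => x (g j')) j) ((m : ℝ) * (t : ℝ))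
        = stepF (v x (g j)) ((m : ℝ) * (t : ℝ))
      refine stepF_congr (fun a => ?_) _
      have hjact : jAct g (jpt j (min a m)) = jpt (g j) (min a m) := by
        simp only [hjpt]
        by_cases hp : 0 < min a m ∧ min a m ≤ m
        · rw [dif_pos hp, dif_pos hp]; rfl
        · rw [dif_neg hp, dif_neg hp]; rfl
      simp only [hv]
      rw [← hjact]
      exact hequiv g x hx (jpt j (min a m))

lemma dirB {P : Type} [PartialOrder P] [Finite P] [Nonempty P] [inst : TopologicalSpace P]
    (hop : DownOpen P) {n k : ℕ} (hn : 2 ≤ n) (h : TCcond n P k) :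
    ∃ m, CCle P n m 0 k := by
  classical
  obtain ⟨U, hUopen, hUcov, hUinv, hUsec⟩ := h
  choose s hs1 hs2 using hUsec
  set p0 : P := Classical.arbitrary P with hp0
  set q : unitInterval → (Fin k × (Fin n → P) × Fin n) → P := fun t w =>
    if hw : w.2.1 ∈ U w.1 then (s w.1 ⟨w.2.1, hw⟩) (arm n w.2.2 t) else p0 with hq
  have hqc : Continuous q := by
    apply continuous_pi
    intro w
    by_cases hw : w.2.1 ∈ U w.1
    · simp only [hq, dif_pos hw]
      exact (s w.1 ⟨w.2.1, hw⟩).continuous.comp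
        ((continuous_quot_mk).comp (Continuous.prodMk_right w.2.2))
    · simp only [hq, dif_neg hw]
      exact continuous_const
  obtain ⟨N, hNpos, u, tg, htgval, hfence⟩ := fence_exists hop q hqc
  have hNne : (N : ℝ) ≠ 0 := Nat.cast_ne_zero.2 (by omega)
  have htg0 : tg 0 = 0 := by
    apply Subtype.ext
    rw [htgval 0 (by omega)]
    norm_num
  have htgN : tg N = 1 := by
    apply Subtype.ext
    rw [htgval N (le_refl N)]
    rw [div_self hNne]
    norm_num
  have harm0 : ∀ j j' : Fin n, arm n j (0 : unitInterval) = arm n j' 0 :=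
    fun j j' => Quotient.sound (Or.inr ⟨rfl, rfl⟩)
  set j₀ : Fin n := ⟨0, by omega⟩ with hj₀
  refine ⟨2 * N, U, ?_, ?_, ?_, ?_⟩
  · intro i
    exact ⟨fun _ _ => trivial, fun a ha b _ hb => isOpen_pin_downset hop (hUopen i) a ha b hb⟩
  · intro x _
    exact hUcov x
  · intro i g x hx
    exact hUinv i g x hx
  · intro i
    set sec : (Fin n → P) → JP n (2 * N) → P := fun x t =>
      Option.elim t (q (tg 0) (i, x, j₀)) (fun pr =>
        if (pr.2.1 + 1) % 2 = 0 then q (tg ((pr.2.1 + 1) / 2)) (i, x, pr.1)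
        else q (u (pr.2.1 / 2)) (i, x, pr.1)) with hsec
    have hqval : ∀ (x : Fin n → P) (hx : x ∈ U i) (t : unitInterval) (j : Fin n),
        q t (i, x, j) = (s i ⟨x, hx⟩) (arm n j t) := by
      intro x hx t j
      simp only [hq]
      rw [dif_pos hx]
    have hbase : ∀ (x : Fin n → P), x ∈ U i → ∀ j j' : Fin n,
        q (tg 0) (i, x, j) = q (tg 0) (i, x, j') := by
      intro x hx j j'
      rw [hqval x hx, hqval x hx, htg0, harm0 j j']
    refine ⟨sec, ?_, ?_, ?_, ?_⟩
    -- (a) JMono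
    · intro x hx a b hab
      match a, b with
      | none, none => exact le_refl _
      | none, some pr =>
        rcases hab with h0 | ⟨h1, h2, h3⟩
        · omega
        · simp only [hsec, Option.elim]
          rw [if_neg (by omega : ¬ (pr.2.1 + 1) % 2 = 0)]
          rw [hbase x hx j₀ pr.1, show pr.2.1 / 2 = 0 by omega]
          exact (hfence 0 hNpos).1 (i, x, pr.1)
      | some pr, none =>
        rcases hab with h0 | ⟨h1, h2, h3⟩
        · omega
        · exact absurd h2 (by norm_num)
      | some pr, some pr' =>
        obtain ⟨hj, hf⟩ := hab
        rcases hf with heq | ⟨he, ho, hadj⟩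
        · have hpr : pr = pr' := Prod.ext hj (Fin.ext (by omega))
          rw [hpr]
        · simp only [hsec, Option.elim]
          rw [if_pos he, if_neg (by omega : ¬ (pr'.2.1 + 1) % 2 = 0), hj]
          rcases hadj with hr | hr
          · rw [show pr'.2.1 / 2 = (pr.2.1 + 1) / 2 by omega]
            have h2 : (pr.2.1 + 1) / 2 < N := by
              have := pr'.2.2
              omega
            exact (hfence _ h2).1 (i, x, pr'.1)
          · rw [show (pr.2.1 + 1) / 2 = pr'.2.1 / 2 + 1 by omega]
            have h2 : pr'.2.1 / 2 < N := by
              have := pr'.2.2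
              omega
            exact (hfence _ h2).2 (i, x, pr'.1)
    -- (b) monotonicity in x
    · intro x hx y hy hle t
      have hmq : ∀ (τ : unitInterval) (j : Fin n), q τ (i, x, j) ≤ q τ (i, y, j) := by
        intro τ j
        rw [hqval x hx, hqval y hy]
        exact sec_mono hop (s i) hx hy hle _
      match t with
      | none => exact hmq _ _
      | some pr =>
        simp only [hsec, Option.elim]
        split_ifs
        · exact hmq _ _
        · exact hmq _ _
    -- (c) equivariance
    · intro g x hx t
      have hgx : pAct g x ∈ U i := hUinv i g x hx
      have hqe : ∀ (τ : unitInterval) (j : Fin n), q τ (i, pAct g x, j) = q τ (i, x, g j) := by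
        intro τ j
        rw [hqval _ hgx, hqval _ hx]
        exact hs2 i g x hx hgx τ j
      match t with
      | none =>
        show q (tg 0) (i, pAct g x, j₀) = q (tg 0) (i, x, j₀)
        rw [hqe, hbase x hx (g j₀) j₀]
      | some pr =>
        show _ = sec x (some (g pr.1, pr.2))
        simp only [hsec, Option.elim]
        try dsimp only
        split_ifs
        · exact hqe _ _
        · exact hqe _ _
    -- (d) endpoints
    · intro x hx j
      show sec x (endPt n (2 * N) j) = x j
      have hend : endPt n (2 * N) j = some (j, ⟨2 * N - 1, by omega⟩) := by
        unfold endPt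
        rw [dif_pos (by omega : 0 < 2 * N)]
      rw [hend]
      simp only [hsec, Option.elim]
      try dsimp only
      rw [if_pos (by omega : (2 * N - 1 + 1) % 2 = 0)]
      rw [show (2 * N - 1 + 1) / 2 = N by omega]
      rw [hqval x hx, htgN]
      exact hs1 i ⟨x, hx⟩ j

end S19
/-- `CC^{Σ,0}_n(P) = TC^Σ_n(P)` for a finite `T₀` space `P` (with its
Alexandrov topology). -/
theorem statement19 (P : Type) [PartialOrder P] [Finite P] [Nonempty P]
    (n : ℕ) (hn : 2 ≤ n) :
    CCr P n 0 = @TCSigma n P (lowTop P (· ≤ ·)) := by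
  unfold CCr TCSigma
  congr 1
  ext k
  simp only [Set.mem_setOf_eq]
  constructor
  · rintro ⟨k0, m, rfl, h⟩
    exact ⟨k0, rfl, S19.dirA (inst := lowTop P (· ≤ ·)) (S19.lowTop_downOpen P) hn h⟩
  · rintro ⟨k0, rfl, h⟩
    obtain ⟨m, hm⟩ := S19.dirB (inst := lowTop P (· ≤ ·)) (S19.lowTop_downOpen P) hn h
    exact ⟨k0, m, rfl, hm⟩
end
end
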